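/- For all positive integers k, l, and any signed permutation π ∈ B_n: C(2kl+k+n-ades(π), n) = Σ_{στ=π} C(k+n-ades(σ), n) · C(l+n-des(τ), n), where the sum ranges over all pairs (σ,τ) ∈ B_n × B_n with στ = π. -/

import Mathlib

open Finset
open scoped Classical

/-- The value `π(s)` (0-indexed) of a permutation of `Fin n`, as a natural number. -/
def aval (n : ℕ) (π : Equiv.Perm (Fin n)) (s : ℕ) : ℕ :=
  if h : s < n then (π ⟨s, h⟩ : ℕ) else s

/-- The descent set of `π ∈ S_n` (0-indexed positions `s` with `π(s) > π(s+1)`). -/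
def desSetA (n : ℕ) (π : Equiv.Perm (Fin n)) : Finset ℕ :=
  (Finset.range (n - 1)).filter (fun s => aval n π (s + 1) < aval n π s)

/-- The descent number of `π ∈ S_n`. -/
def desA (n : ℕ) (π : Equiv.Perm (Fin n)) : ℕ := (desSetA n π).card

/-- The cyclic descent number of `π ∈ S_n`: ordinary descents together with a
descent in the last position when `π(n) > π(1)` (0-indexed: `π(n-1) > π(0)`). -/
def cdesA (n : ℕ) (π : Equiv.Perm (Fin n)) : ℕ :=
  desA n π + (if aval n π 0 < aval n π (n - 1) then 1 else 0)
/-- The underlying set `{-n, ..., n}` of the hyperoctahedral group `B_n`. -/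
noncomputable def Bset (n : ℕ) : Finset ℤ := Finset.Icc (-(n : ℤ)) n

/-- Negation as a map of `{-n, ..., n}` to itself. -/
def negB (n : ℕ) (s : Bset n) : Bset n :=
  ⟨-(s : ℤ), by
    have h := s.2
    simp only [Bset, Finset.mem_Icc] at h ⊢
    omega⟩

/-- A permutation of `{-n, ..., n}` is a signed permutation if `π(-s) = -π(s)`. -/
def IsSigned (n : ℕ) (π : Equiv.Perm (Bset n)) : Prop :=
  ∀ s : Bset n, π (negB n s) = negB n (π s)

/-- The value `π(z)` of a permutation of `{-n, ..., n}` at an integer `z`. -/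
noncomputable def bval (n : ℕ) (π : Equiv.Perm (Bset n)) (z : ℤ) : ℤ :=
  if h : z ∈ Bset n then ((π ⟨z, h⟩ : Bset n) : ℤ) else z

/-- The type B descent set: positions `0 ≤ s ≤ n-1` with `π(s) > π(s+1)`
(note `π(0) = 0` for a signed permutation). -/
noncomputable def desSetB (n : ℕ) (π : Equiv.Perm (Bset n)) : Finset ℕ :=
  (Finset.range n).filter (fun s => bval n π ((s : ℤ) + 1) < bval n π (s : ℤ))

/-- The type B descent number. -/
noncomputable def desB (n : ℕ) (π : Equiv.Perm (Bset n)) : ℕ := (desSetB n π).card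

/-- The augmented descent set: ordinary type B descents, together with `n`
if `π(n) > 0`. -/
noncomputable def aDesSetB (n : ℕ) (π : Equiv.Perm (Bset n)) : Finset ℕ :=
  (Finset.range (n + 1)).filter
    (fun s => if s < n then bval n π ((s : ℤ) + 1) < bval n π (s : ℤ)
              else 0 < bval n π (n : ℤ))

/-- The augmented descent number. -/
noncomputable def adesB (n : ℕ) (π : Equiv.Perm (Bset n)) : ℕ := (aDesSetB n π).card
section Part0

example (n : ℕ) : WellFoundedLT (Bset n) := Finite.to_wellFoundedLT

lemma mem_Bset {n : ℕ} {z : ℤ} : z ∈ Bset n ↔ -(n : ℤ) ≤ z ∧ z ≤ n := Finset.mem_Icc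

lemma neg_mem_Bset {n : ℕ} {z : ℤ} (h : z ∈ Bset n) : -z ∈ Bset n := by
  rw [mem_Bset] at h ⊢; omega

lemma coe_mem_Bset {n : ℕ} (s : Bset n) : -(n : ℤ) ≤ (s : ℤ) ∧ (s : ℤ) ≤ n :=
  mem_Bset.mp s.2

lemma bval_mem {n : ℕ} (π : Equiv.Perm (Bset n)) {z : ℤ} (h : z ∈ Bset n) :
    bval n π z ∈ Bset n := by
  rw [bval, dif_pos h]; exact (π ⟨z, h⟩).2

lemma bval_of_mem {n : ℕ} (π : Equiv.Perm (Bset n)) {z : ℤ} (h : z ∈ Bset n) :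
    bval n π z = ((π ⟨z, h⟩ : Bset n) : ℤ) := by rw [bval, dif_pos h]

lemma bval_coe {n : ℕ} (π : Equiv.Perm (Bset n)) (s : Bset n) :
    bval n π (s : ℤ) = ((π s : Bset n) : ℤ) := by
  rw [bval_of_mem π s.2]

lemma bval_inj {n : ℕ} (π : Equiv.Perm (Bset n)) {z w : ℤ} (hz : z ∈ Bset n)
    (hw : w ∈ Bset n) (h : bval n π z = bval n π w) : z = w := by
  rw [bval_of_mem π hz, bval_of_mem π hw] at h
  have := π.injective (Subtype.coe_injective h)
  exact congrArg Subtype.val this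

lemma bval_mul {n : ℕ} (σ τ : Equiv.Perm (Bset n)) {z : ℤ} (h : z ∈ Bset n) :
    bval n (σ * τ) z = bval n σ (bval n τ z) := by
  rw [bval_of_mem (σ * τ) h, bval_of_mem τ h, bval_of_mem σ (τ ⟨z, h⟩).2]
  rfl

lemma bval_inv_bval {n : ℕ} (π : Equiv.Perm (Bset n)) {z : ℤ} (h : z ∈ Bset n) :
    bval n π⁻¹ (bval n π z) = z := by
  rw [bval_of_mem π h, bval_of_mem π⁻¹ (π ⟨z, h⟩).2]
  simp

lemma bval_bval_inv {n : ℕ} (π : Equiv.Perm (Bset n)) {z : ℤ} (h : z ∈ Bset n) :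
    bval n π (bval n π⁻¹ z) = z := by
  rw [bval_of_mem π⁻¹ h, bval_of_mem π (π⁻¹ ⟨z, h⟩).2]
  simp

lemma IsSigned.bval_neg {n : ℕ} {π : Equiv.Perm (Bset n)} (hπ : IsSigned n π) (z : ℤ) :
    bval n π (-z) = -bval n π z := by
  by_cases h : z ∈ Bset n
  · have hn : -z ∈ Bset n := neg_mem_Bset h
    rw [bval_of_mem π h, bval_of_mem π hn]
    have : (⟨-z, hn⟩ : Bset n) = negB n ⟨z, h⟩ := rfl
    rw [this, hπ ⟨z, h⟩]
    rfl
  · have hn : ¬(-z ∈ Bset n) := fun hc => h (by have := neg_mem_Bset hc; simpa using this)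
    simp only [bval, dif_neg h, dif_neg hn]

lemma IsSigned.bval_zero {n : ℕ} {π : Equiv.Perm (Bset n)} (hπ : IsSigned n π) :
    bval n π 0 = 0 := by
  have := hπ.bval_neg 0
  simp at this
  omega

lemma IsSigned.mul {n : ℕ} {σ τ : Equiv.Perm (Bset n)} (hσ : IsSigned n σ)
    (hτ : IsSigned n τ) : IsSigned n (σ * τ) := by
  intro s
  have : (σ * τ) (negB n s) = σ (τ (negB n s)) := rfl
  rw [this, hτ s, hσ (τ s)]
  rfl

lemma IsSigned.inv {n : ℕ} {σ : Equiv.Perm (Bset n)} (hσ : IsSigned n σ) :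
    IsSigned n σ⁻¹ := by
  intro s
  have h1 : σ (negB n (σ⁻¹ s)) = negB n s := by
    rw [hσ (σ⁻¹ s)]
    simp
  have := congrArg (fun t => σ⁻¹ t) h1
  simpa using this.symm

lemma IsSigned.of_mul_left {n : ℕ} {σ π : Equiv.Perm (Bset n)} (hσ : IsSigned n σ)
    (hπ : IsSigned n π) : IsSigned n (σ⁻¹ * π) := hσ.inv.mul hπ

/-- Int division uniqueness -/
lemma ediv_unique {a b q r : ℤ} (hb : 0 < b) (h : a = b * q + r) (h0 : 0 ≤ r) (h1 : r < b) :
    a / b = q := by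
  have : a = r + q * b := by linarith
  rw [this, Int.add_mul_ediv_right _ _ (ne_of_gt hb), Int.ediv_eq_zero_of_lt h0 h1, zero_add]

end Part0
section Part1

/-- value of `f` at an integer point -/
noncomputable def fvv (n M : ℕ) (f : Bset n → Bset M) (z : ℤ) : ℤ :=
  if h : z ∈ Bset n then (f ⟨z, h⟩ : ℤ) else 0

def OddF (n M : ℕ) (f : Bset n → Bset M) : Prop :=
  ∀ z : ℤ, fvv n M f (-z) = -fvv n M f z

def CompatF (n M : ℕ) (π : Equiv.Perm (Bset n)) (aug : Bool) (f : Bset n → Bset M) : Prop :=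
  OddF n M f ∧
  (∀ i : ℕ, i < n → fvv n M f (bval n π (i : ℤ)) ≤ fvv n M f (bval n π ((i : ℤ) + 1))) ∧
  (∀ i : ℕ, i < n → bval n π ((i : ℤ) + 1) < bval n π (i : ℤ) →
    fvv n M f (bval n π (i : ℤ)) < fvv n M f (bval n π ((i : ℤ) + 1))) ∧
  (aug = true → 0 < bval n π (n : ℤ) → fvv n M f (bval n π (n : ℤ)) < (M : ℤ))

noncomputable def AFin (n M : ℕ) (π : Equiv.Perm (Bset n)) (aug : Bool) :
    Finset (Bset n → Bset M) :=
  Finset.univ.filter (CompatF n M π aug)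

lemma mem_AFin {n M : ℕ} {π : Equiv.Perm (Bset n)} {aug : Bool} {f : Bset n → Bset M} :
    f ∈ AFin n M π aug ↔ CompatF n M π aug f := by
  simp [AFin]

variable {n M : ℕ} {π : Equiv.Perm (Bset n)} {aug : Bool} {f : Bset n → Bset M}

lemma fvv_bounds (f : Bset n → Bset M) (z : ℤ) :
    -(M : ℤ) ≤ fvv n M f z ∧ fvv n M f z ≤ M := by
  unfold fvv
  split
  · exact coe_mem_Bset _
  · constructor <;> omega

lemma fvv_of_mem (f : Bset n → Bset M) {z : ℤ} (h : z ∈ Bset n) :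
    fvv n M f z = ((f ⟨z, h⟩ : Bset M) : ℤ) := dif_pos h

lemma OddF.fvv_zero (hf : OddF n M f) : fvv n M f 0 = 0 := by
  have := hf 0; simp at this; omega

lemma CompatF.podd (hf : CompatF n M π aug f) (hπ : IsSigned n π) (i : ℤ) :
    fvv n M f (bval n π (-i)) = -fvv n M f (bval n π i) := by
  rw [hπ.bval_neg]; exact hf.1 _

lemma CompatF.pzero (hf : CompatF n M π aug f) (hπ : IsSigned n π) :
    fvv n M f (bval n π 0) = 0 := by
  rw [hπ.bval_zero]; exact hf.1.fvv_zero

lemma CompatF.step (hf : CompatF n M π aug f) (hπ : IsSigned n π) {i : ℤ}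
    (h0 : -(n : ℤ) ≤ i) (h1 : i + 1 ≤ n) :
    fvv n M f (bval n π i) ≤ fvv n M f (bval n π (i + 1)) ∧
      (bval n π (i + 1) < bval n π i →
        fvv n M f (bval n π i) < fvv n M f (bval n π (i + 1))) := by
  rcases le_or_gt 0 i with hi | hi
  · obtain ⟨j, rfl⟩ : ∃ j : ℕ, (j : ℤ) = i := ⟨i.toNat, Int.toNat_of_nonneg hi⟩
    have hj : j < n := by exact_mod_cast by omega
    exact ⟨hf.2.1 j hj, hf.2.2.1 j hj⟩
  · obtain ⟨j, hj⟩ : ∃ j : ℕ, (j : ℤ) = -i - 1 := ⟨(-i - 1).toNat, Int.toNat_of_nonneg (by omega)⟩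
    have hjn : j < n := by omega
    have e1 : (-(j : ℤ)) = i + 1 := by omega
    have e2 : (-((j : ℤ) + 1)) = i := by omega
    have o1 := hf.podd hπ ((j : ℤ) + 1)
    have o2 := hf.podd hπ (j : ℤ)
    rw [e2] at o1
    rw [e1] at o2
    have mono := hf.2.1 j hjn
    have strict := hf.2.2.1 j hjn
    constructor
    · omega
    · intro hd
      have hd' : bval n π ((j : ℤ) + 1) < bval n π (j : ℤ) := by
        have b1 := hπ.bval_neg ((j : ℤ) + 1)
        have b2 := hπ.bval_neg (j : ℤ)
        rw [e2] at b1
        rw [e1] at b2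
        omega
      have := strict hd'
      omega

lemma CompatF.pmono (hf : CompatF n M π aug f) (hπ : IsSigned n π) :
    ∀ (d : ℕ) (i : ℤ), -(n : ℤ) ≤ i → i + d ≤ n →
      fvv n M f (bval n π i) ≤ fvv n M f (bval n π (i + d)) := by
  intro d
  induction d with
  | zero => intro i _ _; simp
  | succ d ih =>
    intro i h0 h1
    have step := (hf.step hπ (i := i + d) (by omega) (by push_cast; omega)).1
    have := ih i h0 (by push_cast at h1 ⊢; omega)
    have e : (i + (d : ℤ)) + 1 = i + ((d : ℕ) + 1 : ℕ) := by push_cast; ring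
    rw [e] at step
    omega

lemma CompatF.pmono' (hf : CompatF n M π aug f) (hπ : IsSigned n π) {i j : ℤ}
    (h0 : -(n : ℤ) ≤ i) (hij : i ≤ j) (h1 : j ≤ n) :
    fvv n M f (bval n π i) ≤ fvv n M f (bval n π j) := by
  obtain ⟨d, hd⟩ : ∃ d : ℕ, (d : ℤ) = j - i := ⟨(j - i).toNat, Int.toNat_of_nonneg (by omega)⟩
  have := hf.pmono hπ d i h0 (by omega)
  have e : i + (d : ℤ) = j := by omega
  rwa [e] at this

lemma CompatF.pcross (hf : CompatF n M π aug f) (hπ : IsSigned n π) :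
    ∀ (i j : ℤ), -(n : ℤ) ≤ i → i < j → j ≤ n →
      fvv n M f (bval n π i) = fvv n M f (bval n π j) → bval n π i < bval n π j := by
  suffices h : ∀ (d : ℕ) (i : ℤ), -(n : ℤ) ≤ i → i + (d + 1 : ℕ) ≤ n →
      fvv n M f (bval n π i) = fvv n M f (bval n π (i + (d + 1 : ℕ))) →
      bval n π i < bval n π (i + (d + 1 : ℕ)) by
    intro i j h0 hij h1 he
    obtain ⟨d, hd⟩ : ∃ d : ℕ, (d : ℤ) = j - i - 1 := ⟨(j - i - 1).toNat, Int.toNat_of_nonneg (by omega)⟩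
    have e : i + ((d + 1 : ℕ) : ℤ) = j := by push_cast; omega
    exact e ▸ h d i h0 (by omega) (by rw [e]; exact he)
  intro d
  induction d with
  | zero =>
    intro i h0 h1 he
    push_cast at h1 he ⊢
    have step := hf.step hπ (i := i) h0 (by omega)
    have hne : bval n π i ≠ bval n π (i + 1) :=
      fun hc => by
        have := bval_inj π (mem_Bset.mpr ⟨h0, by omega⟩) (mem_Bset.mpr ⟨by omega, by omega⟩) hc
        omega
    rcases lt_trichotomy (bval n π i) (bval n π (i + 1)) with h | h | h
    · exact h
    · exact absurd h hne
    · exact absurd he (by have := step.2 h; omega)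
  | succ d ih =>
    intro i h0 h1 he
    have hmono1 := (hf.step hπ (i := i) h0 (by push_cast at h1 ⊢; omega)).1
    have hmono2 := hf.pmono' hπ (i := i + 1) (j := i + (d + 1 + 1 : ℕ)) (by omega)
      (by push_cast; omega) (by push_cast at h1 ⊢; omega)
    have he1 : fvv n M f (bval n π i) = fvv n M f (bval n π (i + 1)) := by omega
    have he2 : fvv n M f (bval n π (i + 1)) = fvv n M f (bval n π (i + (d + 1 + 1 : ℕ))) := by omega
    have s1 : bval n π i < bval n π (i + 1) := by
      have step := hf.step hπ (i := i) h0 (by push_cast at h1 ⊢; omega)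
      have hne : bval n π i ≠ bval n π (i + 1) :=
        fun hc => by
          have := bval_inj π (mem_Bset.mpr ⟨h0, by push_cast at h1; omega⟩)
            (mem_Bset.mpr ⟨by omega, by push_cast at h1; omega⟩) hc
          omega
      rcases lt_trichotomy (bval n π i) (bval n π (i + 1)) with h | h | h
      · exact h
      · exact absurd h hne
      · exact absurd he1 (by have := step.2 h; omega)
    have s2 : bval n π (i + 1) < bval n π (i + 1 + (d + 1 : ℕ)) := by
      refine ih (i + 1) (by omega) (by push_cast at h1 ⊢; omega) ?_
      have e : i + 1 + ((d + 1 : ℕ) : ℤ) = i + ((d + 1 + 1 : ℕ) : ℤ) := by push_cast; ring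
      rw [e]; exact he2
    have e : i + 1 + ((d + 1 : ℕ) : ℤ) = i + ((d + 1 + 1 : ℕ) : ℤ) := by push_cast; ring
    rw [e] at s2
    omega

/-- If `f` attains the maximal value `M` (with the augmented condition) at a letter `z`,
then `z < 0`. -/
lemma CompatF.top_neg (hf : CompatF n M π true f) (hπ : IsSigned n π) (hM : 0 < M)
    {z : ℤ} (hz : z ∈ Bset n) (hv : fvv n M f z = M) : z < 0 := by
  set i := bval n π⁻¹ z with hi
  have hiB : i ∈ Bset n := bval_mem π⁻¹ hz
  have hpi : bval n π i = z := bval_bval_inv π hz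
  have hiBb := mem_Bset.mp hiB
  have hipos : 0 < i := by
    by_contra hneg
    push_neg at hneg
    have h1 : fvv n M f (bval n π (-i)) = -fvv n M f (bval n π i) := hf.podd hπ i
    have h2 : fvv n M f (bval n π 0) ≤ fvv n M f (bval n π (-i)) :=
      hf.pmono' hπ (by omega) (by omega) (by omega)
    rw [hf.pzero hπ] at h2
    rw [hpi, hv] at h1
    omega
  have hn1 : 1 ≤ n := by omega
  have hPn_le : fvv n M f (bval n π (n : ℤ)) ≤ M := (fvv_bounds f _).2
  have hPn_ge : fvv n M f (bval n π i) ≤ fvv n M f (bval n π (n : ℤ)) :=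
    hf.pmono' hπ (by omega) (by omega) (by omega)
  rw [hpi, hv] at hPn_ge
  have hPn : fvv n M f (bval n π (n : ℤ)) = M := le_antisymm hPn_le hPn_ge
  have hqn_neg : bval n π (n : ℤ) < 0 := by
    have hqn_le : bval n π (n : ℤ) ≤ 0 := by
      by_contra hc
      push_neg at hc
      have := hf.2.2.2 rfl hc
      omega
    have hqn_ne : bval n π (n : ℤ) ≠ 0 := by
      intro hc
      have h0 : bval n π 0 = 0 := hπ.bval_zero
      have := bval_inj π (mem_Bset.mpr ⟨by omega, by omega⟩) (mem_Bset.mpr ⟨by omega, by omega⟩)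
        (hc.trans h0.symm)
      omega
    omega
  rcases eq_or_lt_of_le (show i ≤ (n : ℤ) by omega) with hin | hin
  · rw [← hpi, hin]; omega
  · have := hf.pcross hπ i n (by omega) hin (by omega) (by rw [hpi, hv, hPn])
    omega

lemma CompatF.bot_pos (hf : CompatF n M π true f) (hπ : IsSigned n π) (hM : 0 < M)
    {z : ℤ} (hz : z ∈ Bset n) (hv : fvv n M f z = -(M : ℤ)) : 0 < z := by
  have h1 := hf.1 z
  have h2 : fvv n M f (-z) = M := by omega
  have := hf.top_neg hπ hM (neg_mem_Bset hz) h2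
  omega

end Part1
section Part2

/-- stepwise monotone implies monotone on an interval -/
lemma stepwise_le {g : ℕ → ℕ} {a b : ℕ} (h : ∀ i, a ≤ i → i + 1 ≤ b → g i ≤ g (i + 1)) :
    ∀ {i j}, a ≤ i → i ≤ j → j ≤ b → g i ≤ g j := by
  intro i j hai
  induction j with
  | zero =>
    intro hij _
    have : i = 0 := by omega
    subst this
    exact le_refl _
  | succ j ih =>
    intro hij hjb
    rcases Nat.lt_or_ge i (j + 1) with hlt | hge
    · have h1 : g i ≤ g j := ih (by omega) (by omega)
      have h2 : g j ≤ g (j + 1) := h j (by omega) (by omega)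
      omega
    · have : i = j + 1 := by omega
      subst this
      exact le_refl _

lemma stepwise_lt {g : ℕ → ℕ} {a b : ℕ} (h : ∀ i, a ≤ i → i + 1 ≤ b → g i < g (i + 1)) :
    ∀ {i j}, a ≤ i → i < j → j ≤ b → g i < g j := by
  intro i j hai
  induction j with
  | zero => omega
  | succ j ih =>
    intro hij hjb
    rcases Nat.lt_or_ge i j with hlt | hge
    · have h1 : g i < g j := ih (by omega) (by omega)
      have h2 : g j < g (j + 1) := h j (by omega) (by omega)
      omega
    · have : i = j := by omega
      subst this
      exact h i (by omega) (by omega)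

/-- the value of a chain at a natural number index -/
def cnv (n M : ℕ) (c : Fin (n + 1) → Fin (M + 1)) (i : ℕ) : ℕ :=
  if h : i < n + 1 then (c ⟨i, h⟩ : ℕ) else 0

noncomputable def ChainF (n M : ℕ) (S : Finset ℕ) : Finset (Fin (n + 1) → Fin (M + 1)) :=
  Finset.univ.filter (fun c =>
    cnv n M c 0 = 0 ∧
    (∀ i : ℕ, i < n → cnv n M c i ≤ cnv n M c (i + 1)) ∧
    (∀ i : ℕ, i < n → i ∈ S → cnv n M c i < cnv n M c (i + 1)) ∧
    (n ∈ S → cnv n M c n < M))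

lemma mem_ChainF {n M : ℕ} {S : Finset ℕ} {c : Fin (n + 1) → Fin (M + 1)} :
    c ∈ ChainF n M S ↔
      cnv n M c 0 = 0 ∧
      (∀ i : ℕ, i < n → cnv n M c i ≤ cnv n M c (i + 1)) ∧
      (∀ i : ℕ, i < n → i ∈ S → cnv n M c i < cnv n M c (i + 1)) ∧
      (n ∈ S → cnv n M c n < M) := by
  simp [ChainF]

lemma scard_succ (S : Finset ℕ) (j : ℕ) :
    (S ∩ Finset.range (j + 1)).card
      = (S ∩ Finset.range j).card + (if j ∈ S then 1 else 0) := by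
  rw [Finset.range_add_one, Finset.inter_comm, Finset.inter_comm S]
  by_cases h : j ∈ S
  · rw [Finset.insert_inter_of_mem h, Finset.card_insert_of_notMem (by simp), if_pos h]
  · rw [Finset.insert_inter_of_notMem h, if_neg h, Nat.add_zero]

lemma scard_le (S : Finset ℕ) (j : ℕ) : (S ∩ Finset.range j).card ≤ j := by
  calc (S ∩ Finset.range j).card ≤ (Finset.range j).card :=
        Finset.card_le_card Finset.inter_subset_right
    _ = j := Finset.card_range j

lemma scard_ge {n : ℕ} {S : Finset ℕ} (hS : S ⊆ Finset.range (n + 1)) {j : ℕ} (hj : j ≤ n + 1) :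
    S.card ≤ (S ∩ Finset.range j).card + (n + 1 - j) := by
  have h1 : (S ∩ Finset.range j).card + (S \ Finset.range j).card = S.card :=
    Finset.card_inter_add_card_sdiff S (Finset.range j)
  have h2 : S \ Finset.range j ⊆ Finset.range (n + 1) \ Finset.range j :=
    Finset.sdiff_subset_sdiff hS (le_refl _)
  have h3 : (Finset.range (n + 1) \ Finset.range j).card = n + 1 - j := by
    rw [Finset.card_sdiff_of_subset (Finset.range_subset_range.mpr (by omega))]
    simp
  have := Finset.card_le_card h2
  omega

lemma scard_top {n : ℕ} {S : Finset ℕ} (hS : S ⊆ Finset.range (n + 1)) :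
    S.card = (S ∩ Finset.range n).card + (if n ∈ S then 1 else 0) := by
  have h1 : S ∩ Finset.range (n + 1) = S := Finset.inter_eq_left.mpr hS
  have := scard_succ S n
  rw [h1] at this
  exact this

/-- the subset associated to a chain -/
def tnat (n M : ℕ) (S : Finset ℕ) (c : Fin (n + 1) → Fin (M + 1)) (i : ℕ) : ℕ :=
  cnv n M c i + i - (S ∩ Finset.range i).card

lemma cnv_le (n M : ℕ) (c : Fin (n + 1) → Fin (M + 1)) (i : ℕ) : cnv n M c i ≤ M := by
  unfold cnv
  split
  · exact Nat.lt_succ_iff.mp (Fin.is_lt _)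
  · omega

lemma tnat_step {n M : ℕ} {S : Finset ℕ} {c : Fin (n + 1) → Fin (M + 1)}
    (hc : c ∈ ChainF n M S) : ∀ i, 0 ≤ i → i + 1 ≤ n → tnat n M S c i < tnat n M S c (i + 1) := by
  rw [mem_ChainF] at hc
  intro i _ hin
  have h1 := hc.2.1 i (by omega)
  have h2 := scard_succ S i
  have h3 := scard_le S i
  by_cases hiS : i ∈ S
  · have := hc.2.2.1 i (by omega) hiS
    rw [if_pos hiS] at h2
    unfold tnat
    omega
  · rw [if_neg hiS] at h2
    unfold tnat
    omega

lemma tnat_strict {n M : ℕ} {S : Finset ℕ} {c : Fin (n + 1) → Fin (M + 1)}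
    (hc : c ∈ ChainF n M S) {i j : ℕ} (hij : i < j) (hj : j ≤ n) :
    tnat n M S c i < tnat n M S c j :=
  stepwise_lt (tnat_step hc) (Nat.zero_le i) hij hj

lemma tnat_zero {n M : ℕ} {S : Finset ℕ} {c : Fin (n + 1) → Fin (M + 1)}
    (hc : c ∈ ChainF n M S) : tnat n M S c 0 = 0 := by
  rw [mem_ChainF] at hc
  unfold tnat
  simp [hc.1]

lemma tnat_top {n M : ℕ} {S : Finset ℕ} (hS : S ⊆ Finset.range (n + 1))
    {c : Fin (n + 1) → Fin (M + 1)} (hc : c ∈ ChainF n M S) :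
    tnat n M S c n ≤ M + n - S.card ∧ S.card ≤ M + n := by
  have htop := scard_top hS
  have h3 := scard_le S n
  have h4 := cnv_le n M c n
  rw [mem_ChainF] at hc
  by_cases hnS : n ∈ S
  · have := hc.2.2.2 hnS
    rw [if_pos hnS] at htop
    unfold tnat
    omega
  · rw [if_neg hnS] at htop
    unfold tnat
    omega

/-- forward map: chain to subset -/
def chainT (n M : ℕ) (S : Finset ℕ) (c : Fin (n + 1) → Fin (M + 1)) : Finset ℕ :=
  (Finset.Icc 1 n).image (tnat n M S c)

lemma chainT_mem {n M : ℕ} {S : Finset ℕ} (hS : S ⊆ Finset.range (n + 1))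
    {c : Fin (n + 1) → Fin (M + 1)} (hc : c ∈ ChainF n M S) :
    chainT n M S c ∈ Finset.powersetCard n (Finset.Icc 1 (M + n - S.card)) := by
  rw [Finset.mem_powersetCard]
  constructor
  · intro x hx
    rw [chainT, Finset.mem_image] at hx
    obtain ⟨i, hi, rfl⟩ := hx
    rw [Finset.mem_Icc] at hi
    rw [Finset.mem_Icc]
    constructor
    · have h0 := tnat_zero hc
      have := tnat_strict hc (show 0 < i by omega) hi.2
      omega
    · rcases Nat.eq_or_lt_of_le hi.2 with h | h
      · rw [h]; exact (tnat_top hS hc).1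
      · have := tnat_strict hc h (le_refl n)
        have := (tnat_top hS hc).1
        omega
  · rw [chainT]
    rw [Finset.card_image_of_injOn, Nat.card_Icc]
    · omega
    · intro a ha b hb hab
      simp only [Finset.coe_Icc, Set.mem_Icc] at ha hb
      by_contra hne
      rcases Nat.lt_or_ge a b with h | h
      · have := tnat_strict hc h hb.2; omega
      · have hba : b < a := by omega
        have := tnat_strict hc hba ha.2; omega

/-- backward map: subset to chain -/
noncomputable def chainOf (n M : ℕ) (S T : Finset ℕ) (i : Fin (n + 1)) : Fin (M + 1) :=
  if hc : T.card = n then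
    if hi : (i : ℕ) = 0 then ⟨0, by omega⟩
    else ⟨min M (T.orderEmbOfFin hc ⟨(i : ℕ) - 1, by have := i.isLt; omega⟩
          + (S ∩ Finset.range i).card - i), by omega⟩
  else ⟨0, by omega⟩

end Part2
section Part2b

noncomputable def envl (n : ℕ) (T : Finset ℕ) (j : ℕ) : ℕ :=
  if h : T.card = n then (if hj : j < n then (T.orderEmbOfFin h ⟨j, hj⟩ : ℕ) else 0) else 0

variable {n M : ℕ} {S T : Finset ℕ}

lemma envl_mem (hTc : T.card = n) {j : ℕ} (hj : j < n) : envl n T j ∈ T := by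
  rw [envl, dif_pos hTc, dif_pos hj]
  exact Finset.orderEmbOfFin_mem T hTc _

lemma envl_strict (hTc : T.card = n) {i j : ℕ} (hij : i < j) (hj : j < n) :
    envl n T i < envl n T j := by
  rw [envl, envl, dif_pos hTc, dif_pos hTc, dif_pos hj, dif_pos (by omega : i < n)]
  exact (T.orderEmbOfFin hTc).strictMono (by simp [Fin.lt_def]; omega)

lemma envl_bounds {B : ℕ} (hTc : T.card = n) (hTs : T ⊆ Finset.Icc 1 B) {j : ℕ} (hj : j < n) :
    1 ≤ envl n T j ∧ envl n T j ≤ B := by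
  have := hTs (envl_mem hTc hj)
  rwa [Finset.mem_Icc] at this

lemma envl_ge {B : ℕ} (hTc : T.card = n) (hTs : T ⊆ Finset.Icc 1 B) :
    ∀ j, j < n → j + 1 ≤ envl n T j := by
  intro j
  induction j with
  | zero => intro h; exact (envl_bounds hTc hTs h).1
  | succ j ih =>
    intro h
    have h1 := ih (by omega)
    have h2 := envl_strict hTc (show j < j + 1 by omega) h
    omega

lemma chainOf_cnv_zero : cnv n M (chainOf n M S T) 0 = 0 := by
  rw [cnv, dif_pos (by omega : 0 < n + 1), chainOf]
  split
  · rw [dif_pos rfl]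
  · rfl

lemma chainOf_cnv (hTc : T.card = n) {j : ℕ} (h1 : 1 ≤ j) (h2 : j ≤ n) :
    cnv n M (chainOf n M S T) j
      = min M (envl n T (j - 1) + (S ∩ Finset.range j).card - j) := by
  rw [cnv, dif_pos (by omega : j < n + 1), chainOf, dif_pos hTc,
    dif_neg (by simpa using by omega : ¬((⟨j, by omega⟩ : Fin (n + 1)) : ℕ) = 0)]
  simp only [envl, dif_pos hTc, dif_pos (show j - 1 < n by omega)]

lemma rv_le_M (hS : S ⊆ Finset.range (n + 1)) (hTc : T.card = n)
    (hTs : T ⊆ Finset.Icc 1 (M + n - S.card)) : ∀ j, 1 ≤ j → j ≤ n →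
    envl n T (j - 1) + (S ∩ Finset.range j).card - j ≤ M := by
  set g : ℕ → ℕ := fun j => envl n T (j - 1) + (S ∩ Finset.range j).card - j with hg
  have hstep : ∀ i, 1 ≤ i → i + 1 ≤ n → g i ≤ g (i + 1) := by
    intro i h1 h2
    have hE1 := envl_ge hTc hTs (i - 1) (by omega)
    have hE2 : envl n T (i - 1) < envl n T i := envl_strict hTc (by omega) (by omega)
    have hsc := scard_succ S i
    have hsl := scard_le S i
    have e1 : i + 1 - 1 = i := by omega
    simp only [hg, e1]
    split at hsc <;> omega
  have htopb : g n ≤ M := by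
    rcases Nat.eq_zero_or_pos n with rfl | hn
    · have h0 : g 0 = 0 := by simp [hg, envl]
      omega
    · have hE := envl_bounds hTc hTs (show n - 1 < n by omega)
      have htop := scard_top hS
      have hsl := scard_le S n
      have e1 : n - 1 + 1 = n := by omega
      simp only [hg]
      split at htop <;> omega
  intro j h1 h2
  exact le_trans (stepwise_le hstep h1 h2 (le_refl n)) htopb

lemma chainOf_mem (hS : S ⊆ Finset.range (n + 1)) (hTc : T.card = n)
    (hTs : T ⊆ Finset.Icc 1 (M + n - S.card)) (hSM : S.card ≤ M + n) :
    chainOf n M S T ∈ ChainF n M S := by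
  have hrv := rv_le_M hS hTc hTs
  have hcnv : ∀ j, 1 ≤ j → j ≤ n → cnv n M (chainOf n M S T) j
      = envl n T (j - 1) + (S ∩ Finset.range j).card - j := by
    intro j h1 h2
    rw [chainOf_cnv hTc h1 h2, min_eq_right (hrv j h1 h2)]
  rw [mem_ChainF]
  refine ⟨chainOf_cnv_zero, ?_, ?_, ?_⟩
  · intro i hi
    rcases Nat.eq_zero_or_pos i with rfl | hpos
    · rw [chainOf_cnv_zero]; omega
    · rw [hcnv i (by omega) (by omega), hcnv (i + 1) (by omega) (by omega)]
      have hE := envl_ge hTc hTs (i - 1) (by omega)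
      have hE2 : envl n T (i - 1) < envl n T i := envl_strict hTc (by omega) (by omega)
      have hsc := scard_succ S i
      have hsl := scard_le S i
      have e1 : i + 1 - 1 = i := by omega
      rw [e1]
      split at hsc <;> omega
  · intro i hi hiS
    rcases Nat.eq_zero_or_pos i with rfl | hpos
    · have hE := envl_bounds hTc hTs (show 0 < n by omega)
      have hs1 : 0 < (S ∩ Finset.range 1).card :=
        Finset.card_pos.mpr ⟨0, Finset.mem_inter.mpr ⟨hiS, by simp⟩⟩
      have h01 : cnv n M (chainOf n M S T) (0 + 1) = cnv n M (chainOf n M S T) 1 := by norm_num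
      rw [chainOf_cnv_zero, h01, hcnv 1 (by omega) (by omega)]
      have e0 : (1:ℕ) - 1 = 0 := rfl
      rw [e0]
      omega
    · rw [hcnv i (by omega) (by omega), hcnv (i + 1) (by omega) (by omega)]
      have hE := envl_ge hTc hTs (i - 1) (by omega)
      have hE2 : envl n T (i - 1) < envl n T i := envl_strict hTc (by omega) (by omega)
      have hsc := scard_succ S i
      have hsl := scard_le S i
      have e1 : i + 1 - 1 = i := by omega
      rw [e1]
      rw [if_pos hiS] at hsc
      omega
  · intro hnS
    rcases Nat.eq_zero_or_pos n with rfl | hn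
    · rw [chainOf_cnv_zero]
      have htop := scard_top hS
      rw [if_pos hnS] at htop
      have hsl := scard_le S 0
      omega
    · rw [hcnv n (by omega) (by omega)]
      have hE := envl_bounds hTc hTs (show n - 1 < n by omega)
      have htop := scard_top hS
      rw [if_pos hnS] at htop
      have hge := envl_ge hTc hTs (n - 1) (by omega)
      have hsl := scard_le S n
      have e1 : n - 1 + 1 = n := by omega
      omega

lemma tnat_chainOf (hS : S ⊆ Finset.range (n + 1)) (hTc : T.card = n)
    (hTs : T ⊆ Finset.Icc 1 (M + n - S.card)) : ∀ j, 1 ≤ j → j ≤ n →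
    tnat n M S (chainOf n M S T) j = envl n T (j - 1) := by
  intro j h1 h2
  have hrv := rv_le_M hS hTc hTs j h1 h2
  rw [tnat, chainOf_cnv hTc h1 h2, min_eq_right hrv]
  have hE := envl_ge hTc hTs (j - 1) (by omega)
  have hsl := scard_le S j
  omega

end Part2b
section Part2c

variable {n M : ℕ} {S T : Finset ℕ}

lemma envl_eq_emb (hTc : T.card = n) {j : ℕ} (hj : j < n) :
    envl n T j = (T.orderEmbOfFin hTc ⟨j, hj⟩ : ℕ) := by
  rw [envl, dif_pos hTc, dif_pos hj]

lemma cnv_ext {c c' : Fin (n + 1) → Fin (M + 1)}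
    (h : ∀ j, j ≤ n → cnv n M c j = cnv n M c' j) : c = c' := by
  funext i
  have := h i.val (by omega)
  rw [cnv, cnv, dif_pos i.isLt, dif_pos i.isLt] at this
  exact Fin.ext (by simpa using this)

lemma envl_chainT {c : Fin (n + 1) → Fin (M + 1)} (hS : S ⊆ Finset.range (n + 1))
    (hc : c ∈ ChainF n M S) {j : ℕ} (hj : j < n) :
    envl n (chainT n M S c) j = tnat n M S c (j + 1) := by
  have hmem := chainT_mem hS hc
  rw [Finset.mem_powersetCard] at hmem
  obtain ⟨hTs, hTc⟩ := hmem
  have hrange1 : Set.range (fun i : Fin n => envl n (chainT n M S c) i) = ↑(chainT n M S c) := by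
    have : (fun i : Fin n => envl n (chainT n M S c) i)
        = fun i : Fin n => ((chainT n M S c).orderEmbOfFin hTc i : ℕ) := by
      funext i
      rw [envl_eq_emb hTc i.isLt]
    rw [this]
    exact Finset.range_orderEmbOfFin _ hTc
  have hrange2 : Set.range (fun i : Fin n => tnat n M S c ((i : ℕ) + 1)) = ↑(chainT n M S c) := by
    rw [chainT, Finset.coe_image]
    ext x
    constructor
    · rintro ⟨i, rfl⟩
      exact ⟨(i : ℕ) + 1, by simp [Finset.mem_Icc], rfl⟩
    · rintro ⟨j, hj', rfl⟩
      simp only [Finset.coe_Icc, Set.mem_Icc] at hj'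
      exact ⟨⟨j - 1, by omega⟩, by simp; congr 1; omega⟩
  have hsm1 : StrictMono (fun i : Fin n => envl n (chainT n M S c) i) := by
    intro a b hab
    exact envl_strict hTc (by exact_mod_cast hab) b.isLt
  have hsm2 : StrictMono (fun i : Fin n => tnat n M S c ((i : ℕ) + 1)) := by
    intro a b hab
    exact tnat_strict hc (by omega; ) (by omega)
  haveI : WellFoundedLT (Fin n) := Finite.to_wellFoundedLT
  have := (StrictMono.range_inj hsm1 hsm2).mp (hrange1.trans hrange2.symm)
  have happ := congrFun this ⟨j, hj⟩
  simpa using happ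

lemma chainOf_chainT {c : Fin (n + 1) → Fin (M + 1)} (hS : S ⊆ Finset.range (n + 1))
    (hc : c ∈ ChainF n M S) : chainOf n M S (chainT n M S c) = c := by
  have hmem := chainT_mem hS hc
  rw [Finset.mem_powersetCard] at hmem
  obtain ⟨hTs, hTc⟩ := hmem
  apply cnv_ext
  intro j hj
  rcases Nat.eq_zero_or_pos j with rfl | hpos
  · rw [chainOf_cnv_zero]
    rw [mem_ChainF] at hc
    exact hc.1.symm
  · rw [chainOf_cnv hTc hpos hj, envl_chainT hS hc (by omega : j - 1 < n)]
    have e1 : j - 1 + 1 = j := by omega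
    rw [e1, tnat]
    have h1 := scard_le S j
    have h2 := cnv_le n M c j
    have h3 : (S ∩ Finset.range j).card ≤ cnv n M c j + j := by omega
    have : cnv n M c j + j - (S ∩ Finset.range j).card + (S ∩ Finset.range j).card - j
        = cnv n M c j := by omega
    rw [this, min_eq_right h2]

lemma chainT_chainOf (hS : S ⊆ Finset.range (n + 1)) (hTc : T.card = n)
    (hTs : T ⊆ Finset.Icc 1 (M + n - S.card)) :
    chainT n M S (chainOf n M S T) = T := by
  apply Finset.ext
  intro x
  rw [chainT, Finset.mem_image]
  constructor
  · rintro ⟨j, hj, rfl⟩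
    rw [Finset.mem_Icc] at hj
    rw [tnat_chainOf hS hTc hTs j hj.1 hj.2]
    exact envl_mem hTc (by omega)
  · intro hx
    have : x ∈ Set.range (T.orderEmbOfFin hTc) := by
      rw [Finset.range_orderEmbOfFin]
      exact hx
    obtain ⟨i, hi⟩ := this
    refine ⟨(i : ℕ) + 1, by rw [Finset.mem_Icc]; omega, ?_⟩
    rw [tnat_chainOf hS hTc hTs ((i : ℕ) + 1) (by omega) (by omega)]
    have e1 : (i : ℕ) + 1 - 1 = (i : ℕ) := by omega
    rw [e1, envl_eq_emb hTc i.isLt]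
    rw [← hi]

theorem chain_count (hS : S ⊆ Finset.range (n + 1)) (hSM : S.card ≤ M + n) :
    (ChainF n M S).card = (M + n - S.card).choose n := by
  have hpc : (Finset.powersetCard n (Finset.Icc 1 (M + n - S.card))).card
      = (M + n - S.card).choose n := by
    rw [Finset.card_powersetCard, Nat.card_Icc, Nat.add_sub_cancel]
  rw [← hpc]
  apply Finset.card_bij' (i := fun c _ => chainT n M S c) (j := fun T _ => chainOf n M S T)
  · exact fun c hc => chainT_mem hS hc
  · intro T hT
    rw [Finset.mem_powersetCard] at hT
    exact chainOf_mem hS hT.2 hT.1 hSM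
  · exact fun c hc => chainOf_chainT hS hc
  · intro T hT
    rw [Finset.mem_powersetCard] at hT
    exact chainT_chainOf hS hT.2 hT.1

end Part2c
section Part3

noncomputable def gapSet (n : ℕ) (π : Equiv.Perm (Bset n)) (aug : Bool) : Finset ℕ :=
  if aug then aDesSetB n π else desSetB n π

variable {n M : ℕ} {π : Equiv.Perm (Bset n)} {aug : Bool}

lemma gapSet_subset : gapSet n π aug ⊆ Finset.range (n + 1) := by
  rw [gapSet]
  split
  · intro x hx
    rw [aDesSetB, Finset.mem_filter] at hx
    exact hx.1
  · intro x hx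
    rw [desSetB, Finset.mem_filter, Finset.mem_range] at hx
    rw [Finset.mem_range]
    omega

lemma mem_gapSet_lt {i : ℕ} (hi : i < n) :
    i ∈ gapSet n π aug ↔ bval n π ((i : ℤ) + 1) < bval n π (i : ℤ) := by
  rw [gapSet]
  split
  · rw [aDesSetB, Finset.mem_filter, Finset.mem_range, if_pos hi]
    constructor
    · exact fun h => h.2
    · exact fun h => ⟨by omega, h⟩
  · rw [desSetB, Finset.mem_filter, Finset.mem_range]
    constructor
    · exact fun h => h.2
    · exact fun h => ⟨hi, h⟩

lemma mem_gapSet_top : n ∈ gapSet n π aug ↔ aug = true ∧ 0 < bval n π (n : ℤ) := by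
  rcases aug with _ | _
  · simp [gapSet, desSetB]
  · simp [gapSet, aDesSetB]

lemma gapSet_card : (gapSet n π aug).card = if aug then adesB n π else desB n π := by
  rw [gapSet]
  split <;> simp [adesB, desB]

noncomputable def chcF (n M : ℕ) (π : Equiv.Perm (Bset n)) (f : Bset n → Bset M) :
    Fin (n + 1) → Fin (M + 1) :=
  fun i => ⟨(fvv n M f (bval n π ((i : ℕ) : ℤ))).toNat, by
    have := (fvv_bounds f (bval n π ((i : ℕ) : ℤ))).2
    omega⟩

noncomputable def fncF (n M : ℕ) (π : Equiv.Perm (Bset n)) (c : Fin (n + 1) → Fin (M + 1)) :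
    Bset n → Bset M :=
  fun s => ⟨if 0 ≤ bval n π⁻¹ (s : ℤ)
      then (cnv n M c (bval n π⁻¹ (s : ℤ)).toNat : ℤ)
      else -(cnv n M c (-(bval n π⁻¹ (s : ℤ))).toNat : ℤ), by
    have h1 := cnv_le n M c (bval n π⁻¹ (s : ℤ)).toNat
    have h2 := cnv_le n M c (-(bval n π⁻¹ (s : ℤ))).toNat
    rw [mem_Bset]
    split <;> constructor <;> omega⟩

lemma fncF_coe (c : Fin (n + 1) → Fin (M + 1)) (s : Bset n) :
    ((fncF n M π c s : Bset M) : ℤ)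
      = if 0 ≤ bval n π⁻¹ (s : ℤ) then (cnv n M c (bval n π⁻¹ (s : ℤ)).toNat : ℤ)
        else -(cnv n M c (-(bval n π⁻¹ (s : ℤ))).toNat : ℤ) := rfl

lemma chc_cnv (f : Bset n → Bset M) {j : ℕ} (hj : j ≤ n) :
    cnv n M (chcF n M π f) j = (fvv n M f (bval n π (j : ℤ))).toNat := by
  rw [cnv, dif_pos (by omega : j < n + 1)]
  rfl

lemma pos_mem_Bset {j : ℕ} (hj : j ≤ n) : ((j : ℤ)) ∈ Bset n := by
  rw [mem_Bset]; omega

lemma fnc_pos (c : Fin (n + 1) → Fin (M + 1)) {j : ℕ} (hj : j ≤ n) :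
    fvv n M (fncF n M π c) (bval n π (j : ℤ)) = (cnv n M c j : ℤ) := by
  have hb : bval n π (j : ℤ) ∈ Bset n := bval_mem π (pos_mem_Bset hj)
  rw [fvv_of_mem _ hb]
  show ((fncF n M π c ⟨bval n π (j : ℤ), hb⟩ : Bset M) : ℤ) = _
  rw [fncF]
  have hinv : bval n π⁻¹ ((⟨bval n π (j : ℤ), hb⟩ : Bset n) : ℤ) = (j : ℤ) :=
    bval_inv_bval π (pos_mem_Bset hj)
  simp only [hinv]
  rw [if_pos (by omega : (0:ℤ) ≤ (j:ℤ))]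
  simp

lemma chc_mem (hπ : IsSigned n π) {f : Bset n → Bset M} (hf : f ∈ AFin n M π aug) :
    chcF n M π f ∈ ChainF n M (gapSet n π aug) := by
  rw [mem_AFin] at hf
  rw [mem_ChainF]
  refine ⟨?_, ?_, ?_, ?_⟩
  · have hz := hf.pzero hπ
    have e : (((0:ℕ)):ℤ) = 0 := rfl
    rw [chc_cnv f (by omega), e, hz]
    rfl
  · intro i hi
    rw [chc_cnv f (by omega), chc_cnv f (by omega)]
    have h1 := hf.2.1 i hi
    have h0 : (0:ℤ) ≤ fvv n M f (bval n π (i : ℤ)) := by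
      have := hf.pmono' hπ (i := 0) (j := (i : ℤ)) (by omega) (by omega) (by omega)
      rw [hf.pzero hπ] at this
      omega
    have e1 : (((i:ℕ) + 1 : ℕ) : ℤ) = (i : ℤ) + 1 := by push_cast; ring
    rw [e1]
    omega
  · intro i hi hiS
    rw [chc_cnv f (by omega), chc_cnv f (by omega)]
    have hd := (mem_gapSet_lt hi).mp hiS
    have h1 := hf.2.2.1 i hi hd
    have h0 : (0:ℤ) ≤ fvv n M f (bval n π (i : ℤ)) := by
      have := hf.pmono' hπ (i := 0) (j := (i : ℤ)) (by omega) (by omega) (by omega)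
      rw [hf.pzero hπ] at this
      omega
    have e1 : (((i:ℕ) + 1 : ℕ) : ℤ) = (i : ℤ) + 1 := by push_cast; ring
    rw [e1]
    omega
  · intro hnS
    obtain ⟨haug, hpos⟩ := mem_gapSet_top.mp hnS
    have h1 := hf.2.2.2 haug hpos
    have h0 : (0:ℤ) ≤ fvv n M f (bval n π (n : ℤ)) := by
      have := hf.pmono' hπ (i := 0) (j := (n : ℤ)) (by omega) (by omega) (by omega)
      rw [hf.pzero hπ] at this
      omega
    rw [chc_cnv f (le_refl n)]
    omega

lemma fnc_mem (hπ : IsSigned n π) {c : Fin (n + 1) → Fin (M + 1)}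
    (hc : c ∈ ChainF n M (gapSet n π aug)) : fncF n M π c ∈ AFin n M π aug := by
  rw [mem_ChainF] at hc
  rw [mem_AFin]
  have hodd : OddF n M (fncF n M π c) := by
    intro z
    by_cases hz : z ∈ Bset n
    · have hnz : -z ∈ Bset n := neg_mem_Bset hz
      rw [fvv_of_mem _ hz, fvv_of_mem _ hnz, fncF_coe, fncF_coe]
      have hneg : bval n π⁻¹ ((⟨-z, hnz⟩ : Bset n) : ℤ) = -(bval n π⁻¹ z) := by
        show bval n π⁻¹ (-z) = _
        rw [hπ.inv.bval_neg]
      have hz2 : bval n π⁻¹ ((⟨z, hz⟩ : Bset n) : ℤ) = bval n π⁻¹ z := rfl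
      rw [hneg, hz2]
      rcases lt_trichotomy (bval n π⁻¹ z) 0 with h | h | h
      · rw [if_pos (by omega), if_neg (by omega), neg_neg]
      · rw [h]
        norm_num
        simp [hc.1]
      · rw [if_neg (by omega), if_pos (by omega), neg_neg]
    · have hnz : ¬(-z ∈ Bset n) := fun hcon => hz (by have := neg_mem_Bset hcon; simpa using this)
      simp only [fvv]
      rw [dif_neg hnz, dif_neg hz]
      rfl
  refine ⟨hodd, ?_, ?_, ?_⟩
  · intro i hi
    have e1 : ((i : ℤ) + 1) = (((i + 1 : ℕ)) : ℤ) := by push_cast; ring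
    rw [e1, fnc_pos c (by omega : i ≤ n), fnc_pos c (by omega : i + 1 ≤ n)]
    exact_mod_cast hc.2.1 i hi
  · intro i hi hd
    have e1 : ((i : ℤ) + 1) = (((i + 1 : ℕ)) : ℤ) := by push_cast; ring
    rw [e1] at hd ⊢
    rw [fnc_pos c (by omega : i ≤ n), fnc_pos c (by omega : i + 1 ≤ n)]
    have hiS : i ∈ gapSet n π aug := (mem_gapSet_lt hi).mpr (by rw [e1]; exact hd)
    exact_mod_cast hc.2.2.1 i hi hiS
  · intro haug hpos
    rw [fnc_pos c (le_refl n)]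
    have hnS : n ∈ gapSet n π aug := mem_gapSet_top.mpr ⟨haug, hpos⟩
    exact_mod_cast hc.2.2.2 hnS

lemma fnc_chc (hπ : IsSigned n π) {f : Bset n → Bset M} (hf : f ∈ AFin n M π aug) :
    fncF n M π (chcF n M π f) = f := by
  rw [mem_AFin] at hf
  funext s
  apply Subtype.ext
  show ((fncF n M π (chcF n M π f) s : Bset M) : ℤ) = ((f s : Bset M) : ℤ)
  have hs' : (⟨(s : ℤ), s.2⟩ : Bset n) = s := Subtype.ext rfl
  have hfs : fvv n M f (s : ℤ) = ((f s : Bset M) : ℤ) := by rw [fvv_of_mem f s.2, hs']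
  rw [fncF_coe, ← hfs]
  set i := bval n π⁻¹ (s : ℤ) with hidef
  have hiB : i ∈ Bset n := bval_mem π⁻¹ s.2
  have hiBb := mem_Bset.mp hiB
  have hpi : bval n π i = (s : ℤ) := bval_bval_inv π s.2
  rcases le_or_gt 0 i with hi | hi
  · rw [if_pos hi, chc_cnv f (by omega : i.toNat ≤ n)]
    have e1 : ((i.toNat : ℕ) : ℤ) = i := by omega
    rw [e1, hpi]
    have h0 : (0:ℤ) ≤ fvv n M f (s : ℤ) := by
      have := hf.pmono' hπ (i := 0) (j := i) (by omega) (by omega) (by omega)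
      rw [hf.pzero hπ, hpi] at this
      omega
    omega
  · rw [if_neg (by omega), chc_cnv f (by omega : (-i).toNat ≤ n)]
    have e1 : (((-i).toNat : ℕ) : ℤ) = -i := by omega
    rw [e1]
    have hoddv : fvv n M f (bval n π (-i)) = -fvv n M f (s : ℤ) := by
      have := hf.podd hπ i
      rw [hpi] at this
      exact this
    have h0 : (0:ℤ) ≤ fvv n M f (bval n π (-i)) := by
      have := hf.pmono' hπ (i := 0) (j := -i) (by omega) (by omega) (by omega)
      rw [hf.pzero hπ] at this
      omega
    omega

lemma chc_fnc (hπ : IsSigned n π) {c : Fin (n + 1) → Fin (M + 1)}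
    (hc : c ∈ ChainF n M (gapSet n π aug)) : chcF n M π (fncF n M π c) = c := by
  apply cnv_ext
  intro j hj
  rw [chc_cnv _ hj, fnc_pos c hj]
  omega

lemma AFin_card (hπ : IsSigned n π) (hM : 1 ≤ M) :
    (AFin n M π aug).card = (M + n - (if aug then adesB n π else desB n π)).choose n := by
  rw [← gapSet_card (π := π) (aug := aug)]
  have h1 : (AFin n M π aug).card = (ChainF n M (gapSet n π aug)).card := by
    apply Finset.card_bij' (i := fun f _ => chcF n M π f) (j := fun c _ => fncF n M π c)
    · exact fun f hf => chc_mem hπ hf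
    · exact fun c hc => fnc_mem hπ hc
    · exact fun f hf => fnc_chc hπ hf
    · exact fun c hc => chc_fnc hπ hc
  rw [h1]
  apply chain_count gapSet_subset
  have := Finset.card_le_card (gapSet_subset (n := n) (π := π) (aug := aug))
  rw [Finset.card_range] at this
  omega

end Part3
section Part4

lemma sortPerm_unique {n : ℕ} {κ : Bset n → ℤ} (hκ : Function.Injective κ)
    {σ₁ σ₂ : Equiv.Perm (Bset n)}
    (h1 : StrictMono (κ ∘ ⇑σ₁)) (h2 : StrictMono (κ ∘ ⇑σ₂)) : σ₁ = σ₂ := by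
  haveI : WellFoundedLT (Bset n) := Finite.to_wellFoundedLT
  have hr : Set.range (κ ∘ ⇑σ₁) = Set.range (κ ∘ ⇑σ₂) := by
    rw [Set.range_comp, Set.range_comp, Equiv.range_eq_univ, Equiv.range_eq_univ]
  have heq := (StrictMono.range_inj h1 h2).mp hr
  apply Equiv.ext
  intro a
  exact hκ (congrFun heq a)

lemma sortPerm_exists {n : ℕ} (κ : Bset n → ℤ) (hκ : Function.Injective κ) :
    ∃ σ : Equiv.Perm (Bset n), StrictMono (κ ∘ ⇑σ) := by
  classical
  set N := Fintype.card (Bset n) with hN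
  let u : Fin N ≃o Bset n := monoEquivOfFin (Bset n) rfl
  let s : Finset ℤ := Finset.image κ Finset.univ
  have hsc : s.card = N := by
    rw [Finset.card_image_of_injective _ hκ, Finset.card_univ]
  let v : Fin N ≃o {x // x ∈ s} := s.orderIsoOfFin hsc
  have hbij : Function.Bijective (fun t : Bset n =>
      (⟨κ t, Finset.mem_image_of_mem κ (Finset.mem_univ t)⟩ : {x // x ∈ s})) := by
    rw [Fintype.bijective_iff_injective_and_card]
    constructor
    · intro a b hab
      exact hκ (congrArg Subtype.val hab)
    · have h2 : Fintype.card {x // x ∈ s} = N := by rw [Fintype.card_coe]; exact hsc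
      rw [h2, ← hN]
  let e : Bset n ≃ {x // x ∈ s} := Equiv.ofBijective _ hbij
  refine ⟨(u.symm.toEquiv.trans ((v.toEquiv).trans e.symm)), ?_⟩
  intro a b hab
  have hu : u.symm a < u.symm b := u.symm.strictMono hab
  have hv : (v (u.symm a) : ℤ) < (v (u.symm b) : ℤ) := v.strictMono hu
  have hke : ∀ x : {x // x ∈ s}, κ (e.symm x) = (x : ℤ) := by
    intro x
    have := e.apply_symm_apply x
    exact congrArg Subtype.val this
  show κ (e.symm (v (u.symm a))) < κ (e.symm (v (u.symm b)))
  rw [hke, hke]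
  exact hv

end Part4
section Part5

lemma div_pair_pos {k : ℕ} (hk : 0 < k) (x : ℤ) :
    -(k:ℤ) ≤ x - 2*k*((x + k)/(2*k)) ∧ x - 2*k*((x + k)/(2*k)) < k := by
  have h2k : (0:ℤ) < 2*k := by positivity
  have hdm := Int.mul_ediv_add_emod (x + k) (2*k)
  have hnn := Int.emod_nonneg (x + k) (ne_of_gt h2k)
  have hlt := Int.emod_lt_of_pos (x + k) h2k
  constructor <;> linarith

lemma div_pair_neg {k : ℕ} (hk : 0 < k) (x : ℤ) :
    -(k:ℤ) < x - 2*k*((x + k - 1)/(2*k)) ∧ x - 2*k*((x + k - 1)/(2*k)) ≤ k := by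
  have h2k : (0:ℤ) < 2*k := by positivity
  have hdm := Int.mul_ediv_add_emod (x + k - 1) (2*k)
  have hnn := Int.emod_nonneg (x + k - 1) (ne_of_gt h2k)
  have hlt := Int.emod_lt_of_pos (x + k - 1) h2k
  constructor <;> linarith

lemma div_eq_pos {k : ℕ} (hk : 0 < k) {x c r : ℤ} (h : x = 2*k*c + r)
    (h0 : -(k:ℤ) ≤ r) (h1 : r < k) : (x + k)/(2*k) = c := by
  have h2k : (0:ℤ) < 2*k := by positivity
  exact ediv_unique h2k (by linarith : x + k = 2*k*c + (r + k)) (by linarith) (by linarith)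

lemma div_eq_neg {k : ℕ} (hk : 0 < k) {x c r : ℤ} (h : x = 2*k*c + r)
    (h0 : -(k:ℤ) < r) (h1 : r ≤ k) : (x + k - 1)/(2*k) = c := by
  have h2k : (0:ℤ) < 2*k := by positivity
  exact ediv_unique h2k (by linarith : x + k - 1 = 2*k*c + (r + k - 1)) (by linarith) (by linarith)

def gqv (k : ℕ) (x z : ℤ) : ℤ :=
  if 0 < z then (x + k) / (2*k) else if z < 0 then (x + k - 1) / (2*k) else 0

noncomputable def gpart (n k l : ℕ) (f : Bset n → Bset (2*k*l + k)) (z : ℤ) : ℤ :=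
  gqv k (fvv n (2*k*l + k) f z) z

noncomputable def hpart (n k l : ℕ) (f : Bset n → Bset (2*k*l + k)) (z : ℤ) : ℤ :=
  fvv n (2*k*l + k) f z - 2*k * gpart n k l f z

variable {n k l : ℕ} {f : Bset n → Bset (2*k*l + k)}

lemma gpart_decomp (f : Bset n → Bset (2*k*l + k)) (z : ℤ) :
    fvv n (2*k*l + k) f z = 2*k * gpart n k l f z + hpart n k l f z := by
  rw [hpart]; ring

lemma hpart_range_pos (hk : 0 < k) {z : ℤ} (hz : 0 < z) :
    -(k:ℤ) ≤ hpart n k l f z ∧ hpart n k l f z < k := by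
  rw [hpart, gpart, gqv, if_pos hz]
  exact div_pair_pos hk _

lemma hpart_range_neg (hk : 0 < k) {z : ℤ} (hz : z < 0) :
    -(k:ℤ) < hpart n k l f z ∧ hpart n k l f z ≤ k := by
  rw [hpart, gpart, gqv, if_neg (by omega), if_pos hz]
  exact div_pair_neg hk _

lemma hpart_zero' (hodd : OddF n (2*k*l + k) f) : hpart n k l f 0 = 0 := by
  rw [hpart, gpart, gqv]
  norm_num
  rw [hodd.fvv_zero]

lemma gpart_neg (hk : 0 < k) (hodd : OddF n (2*k*l + k) f) (z : ℤ) :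
    gpart n k l f (-z) = -gpart n k l f z := by
  have key : ∀ w : ℤ, 0 < w → gpart n k l f (-w) = -gpart n k l f w := by
    intro w hw
    have hx := hodd w
    set x := fvv n (2*k*l + k) f w with hxd
    set c := (x + k)/(2*k) with hcd
    have hr := div_pair_pos (k := k) hk x
    have hgw : gpart n k l f w = c := by rw [gpart, gqv, if_pos hw, ← hxd]
    have hgnw : gpart n k l f (-w) = -c := by
      rw [gpart, gqv, if_neg (by omega), if_pos (by omega), hx]
      exact div_eq_neg hk (by push_cast; linarith : -x = 2*(k:ℤ)*(-c) + (-(x - 2*k*c)))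
        (by linarith) (by linarith)
    rw [hgw, hgnw]
  rcases lt_trichotomy z 0 with h | h | h
  · have := key (-z) (by omega)
    rw [neg_neg] at this
    omega
  · rw [h]
    norm_num
    rw [gpart, gqv]
    norm_num
  · exact key z h

lemma hpart_neg (hk : 0 < k) (hodd : OddF n (2*k*l + k) f) (z : ℤ) :
    hpart n k l f (-z) = -hpart n k l f z := by
  rw [hpart, hpart, hodd z, gpart_neg hk hodd]
  ring

/-- The forward map of the product bijection. -/
noncomputable def fwdF (n k l : ℕ) (σ : Equiv.Perm (Bset n))
    (h : Bset n → Bset k) (g : Bset n → Bset l) : Bset n → Bset (2*k*l + k) :=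
  fun s => ⟨2*k * fvv n l g (bval n σ⁻¹ (s:ℤ)) + fvv n k h (s:ℤ), by
    have h1 := fvv_bounds g (bval n σ⁻¹ (s:ℤ))
    have h2 := fvv_bounds h (s:ℤ)
    have m1 : 2*(k:ℤ)*fvv n l g (bval n σ⁻¹ (s:ℤ)) ≤ 2*k*l := by
      have := mul_le_mul_of_nonneg_left h1.2 (by positivity : (0:ℤ) ≤ 2*k)
      linarith
    have m2 : -(2*(k:ℤ)*l) ≤ 2*k*fvv n l g (bval n σ⁻¹ (s:ℤ)) := by
      have := mul_le_mul_of_nonneg_left h1.1 (by positivity : (0:ℤ) ≤ 2*k)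
      linarith
    rw [mem_Bset]
    push_cast
    constructor <;> linarith⟩

lemma fwd_fvv (σ : Equiv.Perm (Bset n)) (h : Bset n → Bset k) (g : Bset n → Bset l)
    {z : ℤ} (hz : z ∈ Bset n) :
    fvv n (2*k*l + k) (fwdF n k l σ h g) z
      = 2*k * fvv n l g (bval n σ⁻¹ z) + fvv n k h z := by
  rw [fvv_of_mem _ hz]
  rfl

lemma fwd_mem (hk : 0 < k) {σ τ : Equiv.Perm (Bset n)} (hσ : IsSigned n σ) (hτ : IsSigned n τ)
    {h : Bset n → Bset k} {g : Bset n → Bset l}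
    (hh : h ∈ AFin n k σ true) (hg : g ∈ AFin n l τ false) :
    fwdF n k l σ h g ∈ AFin n (2*k*l + k) (σ * τ) true := by
  rw [mem_AFin] at hh hg ⊢
  have hstep : ∀ j : ℤ, j ∈ Bset n → bval n σ⁻¹ (bval n (σ * τ) j) = bval n τ j := by
    intro j hj
    rw [bval_mul σ τ hj]
    exact bval_inv_bval σ (bval_mem τ hj)
  have hmul : ∀ j : ℤ, j ∈ Bset n → bval n (σ * τ) j = bval n σ (bval n τ j) :=
    fun j hj => bval_mul σ τ hj
  refine ⟨?_, ?_, ?_, ?_⟩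
  · -- oddness
    intro z
    by_cases hz : z ∈ Bset n
    · have hnz : -z ∈ Bset n := neg_mem_Bset hz
      rw [fwd_fvv σ h g hnz, fwd_fvv σ h g hz, hσ.inv.bval_neg, hg.1 _, hh.1 z]
      ring
    · have hnz : ¬(-z ∈ Bset n) := fun hcon => hz (by have := neg_mem_Bset hcon; simpa using this)
      rw [fvv, dif_neg hnz, fvv, dif_neg hz]
      ring
  · -- monotone
    intro i hi
    have hm1 : ((i:ℤ)) ∈ Bset n := pos_mem_Bset (by omega)
    have hm2 : ((i:ℤ)) + 1 ∈ Bset n := mem_Bset.mpr ⟨by omega, by omega⟩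
    rw [fwd_fvv σ h g (bval_mem _ hm1), fwd_fvv σ h g (bval_mem _ hm2),
      hstep _ hm1, hstep _ hm2, hmul _ hm1, hmul _ hm2]
    have hG := hg.pmono' hτ (i := (i:ℤ)) (j := (i:ℤ)+1) (by omega) (by omega) (by omega)
    rcases eq_or_lt_of_le hG with heq | hlt
    · have hab : bval n τ (i:ℤ) < bval n τ ((i:ℤ)+1) :=
        hg.pcross hτ (i:ℤ) ((i:ℤ)+1) (by omega) (by omega) (by omega) heq
      have habm := mem_Bset.mp (bval_mem τ hm1)
      have habm2 := mem_Bset.mp (bval_mem τ hm2)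
      have hH := hh.pmono' hσ (i := bval n τ (i:ℤ)) (j := bval n τ ((i:ℤ)+1))
        (by omega) (le_of_lt hab) (by omega)
      rw [heq]
      linarith
    · have hm : 2*(k:ℤ)*(fvv n l g (bval n τ (i:ℤ))) + 2*k
          ≤ 2*k*(fvv n l g (bval n τ ((i:ℤ)+1))) := by
        have h1 : fvv n l g (bval n τ (i:ℤ)) + 1 ≤ fvv n l g (bval n τ ((i:ℤ)+1)) := hlt
        have := mul_le_mul_of_nonneg_left h1 (by positivity : (0:ℤ) ≤ 2*k)
        linarith
      have hHa := fvv_bounds h (bval n σ (bval n τ (i:ℤ)))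
      have hHb := fvv_bounds h (bval n σ (bval n τ ((i:ℤ)+1)))
      linarith
  · -- strict at descents
    intro i hi hd
    have hm1 : ((i:ℤ)) ∈ Bset n := pos_mem_Bset (by omega)
    have hm2 : ((i:ℤ)) + 1 ∈ Bset n := mem_Bset.mpr ⟨by omega, by omega⟩
    rw [fwd_fvv σ h g (bval_mem _ hm1), fwd_fvv σ h g (bval_mem _ hm2),
      hstep _ hm1, hstep _ hm2, hmul _ hm1, hmul _ hm2]
    rw [hmul _ hm1, hmul _ hm2] at hd
    have hG := hg.pmono' hτ (i := (i:ℤ)) (j := (i:ℤ)+1) (by omega) (by omega) (by omega)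
    rcases eq_or_lt_of_le hG with heq | hlt
    · have hab : bval n τ (i:ℤ) < bval n τ ((i:ℤ)+1) :=
        hg.pcross hτ (i:ℤ) ((i:ℤ)+1) (by omega) (by omega) (by omega) heq
      have habm := mem_Bset.mp (bval_mem τ hm1)
      have habm2 := mem_Bset.mp (bval_mem τ hm2)
      have hH := hh.pmono' hσ (i := bval n τ (i:ℤ)) (j := bval n τ ((i:ℤ)+1))
        (by omega) (le_of_lt hab) (by omega)
      have hHne : fvv n k h (bval n σ (bval n τ (i:ℤ)))
          ≠ fvv n k h (bval n σ (bval n τ ((i:ℤ)+1))) := by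
        intro hcon
        have := hh.pcross hσ (bval n τ (i:ℤ)) (bval n τ ((i:ℤ)+1))
          (by omega) hab (by omega) hcon
        omega
      rw [heq]
      have : fvv n k h (bval n σ (bval n τ (i:ℤ)))
          < fvv n k h (bval n σ (bval n τ ((i:ℤ)+1))) := lt_of_le_of_ne hH hHne
      linarith
    · by_contra hcon
      push_neg at hcon
      have hm : 2*(k:ℤ)*(fvv n l g (bval n τ (i:ℤ))) + 2*k
          ≤ 2*k*(fvv n l g (bval n τ ((i:ℤ)+1))) := by
        have h1 : fvv n l g (bval n τ (i:ℤ)) + 1 ≤ fvv n l g (bval n τ ((i:ℤ)+1)) := hlt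
        have := mul_le_mul_of_nonneg_left h1 (by positivity : (0:ℤ) ≤ 2*k)
        linarith
      have hHa := fvv_bounds h (bval n σ (bval n τ (i:ℤ)))
      have hHb := fvv_bounds h (bval n σ (bval n τ ((i:ℤ)+1)))
      have hHatop : fvv n k h (bval n σ (bval n τ (i:ℤ))) = k := by linarith
      have hHbbot : fvv n k h (bval n σ (bval n τ ((i:ℤ)+1))) = -(k:ℤ) := by linarith
      have h1 := hh.top_neg hσ hk (bval_mem σ (bval_mem τ hm1)) hHatop
      have h2 := hh.bot_pos hσ hk (bval_mem σ (bval_mem τ hm2)) hHbbot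
      omega
  · -- augmented condition
    intro _ hpos
    have hm1 : ((n:ℤ)) ∈ Bset n := pos_mem_Bset (le_refl n)
    rw [fwd_fvv σ h g (bval_mem _ hm1), hstep _ hm1, hmul _ hm1]
    rw [hmul _ hm1] at hpos
    have hG := fvv_bounds g (bval n τ (n:ℤ))
    have hH := fvv_bounds h (bval n σ (bval n τ (n:ℤ)))
    have hHne : fvv n k h (bval n σ (bval n τ (n:ℤ))) ≠ k := by
      intro hcon
      have := hh.top_neg hσ hk (bval_mem σ (bval_mem τ hm1)) hcon
      omega
    have hm : 2*(k:ℤ)*(fvv n l g (bval n τ (n:ℤ))) ≤ 2*k*l := by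
      have := mul_le_mul_of_nonneg_left hG.2 (by positivity : (0:ℤ) ≤ 2*k)
      linarith
    push_cast
    have : fvv n k h (bval n σ (bval n τ (n:ℤ))) < k := lt_of_le_of_ne hH.2 hHne
    linarith

end Part5
section Part6a

variable {n k l : ℕ} {f : Bset n → Bset (2*k*l + k)}

noncomputable def keyF (n k l : ℕ) (f : Bset n → Bset (2*k*l + k)) (t : Bset n) : ℤ :=
  (2*n + 1) * hpart n k l f (t : ℤ) + (t : ℤ)

lemma keyF_inj : Function.Injective (keyF n k l f) := by
  intro a b hab
  have ha := coe_mem_Bset a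
  have hb := coe_mem_Bset b
  rw [keyF, keyF] at hab
  have hH : hpart n k l f (a : ℤ) = hpart n k l f (b : ℤ) := by
    by_contra hne
    rcases lt_or_gt_of_ne hne with hlt | hgt
    · have h1 : hpart n k l f (a : ℤ) + 1 ≤ hpart n k l f (b : ℤ) := hlt
      have := mul_le_mul_of_nonneg_left h1 (by positivity : (0:ℤ) ≤ 2*n + 1)
      linarith
    · have h1 : hpart n k l f (b : ℤ) + 1 ≤ hpart n k l f (a : ℤ) := hgt
      have := mul_le_mul_of_nonneg_left h1 (by positivity : (0:ℤ) ≤ 2*n + 1)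
      linarith
  apply Subtype.ext
  rw [hH] at hab
  linarith

lemma keyF_lt_iff {a b : Bset n} :
    keyF n k l f a < keyF n k l f b ↔
      (hpart n k l f (a : ℤ) < hpart n k l f (b : ℤ) ∨
        (hpart n k l f (a : ℤ) = hpart n k l f (b : ℤ) ∧ (a : ℤ) < (b : ℤ))) := by
  have ha := coe_mem_Bset a
  have hb := coe_mem_Bset b
  rw [keyF, keyF]
  constructor
  · intro hab
    rcases lt_trichotomy (hpart n k l f (a : ℤ)) (hpart n k l f (b : ℤ)) with h | h | h
    · exact Or.inl h
    · refine Or.inr ⟨h, ?_⟩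
      rw [h] at hab
      linarith
    · exfalso
      have h1 : hpart n k l f (b : ℤ) + 1 ≤ hpart n k l f (a : ℤ) := h
      have := mul_le_mul_of_nonneg_left h1 (by positivity : (0:ℤ) ≤ 2*n + 1)
      linarith
  · intro hab
    rcases hab with h | ⟨h1, h2⟩
    · have h1 : hpart n k l f (a : ℤ) + 1 ≤ hpart n k l f (b : ℤ) := h
      have := mul_le_mul_of_nonneg_left h1 (by positivity : (0:ℤ) ≤ 2*n + 1)
      linarith
    · rw [h1]
      linarith

noncomputable def sigF (n k l : ℕ) (f : Bset n → Bset (2*k*l + k)) : Equiv.Perm (Bset n) :=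
  (sortPerm_exists (keyF n k l f) keyF_inj).choose

lemma sigF_spec : StrictMono (keyF n k l f ∘ ⇑(sigF n k l f)) :=
  (sortPerm_exists (keyF n k l f) keyF_inj).choose_spec

/-- negation as a permutation -/
def negPerm (n : ℕ) : Equiv.Perm (Bset n) :=
  ⟨negB n, negB n, fun s => Subtype.ext (by simp [negB]), fun s => Subtype.ext (by simp [negB])⟩

lemma negPerm_apply (s : Bset n) : ((negPerm n s : Bset n) : ℤ) = -(s : ℤ) := rfl

lemma lt_iff_coe_lt {a b : Bset n} : a < b ↔ (a : ℤ) < (b : ℤ) := Iff.rfl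

lemma keyF_neg (hk : 0 < k) (hodd : OddF n (2*k*l + k) f) (t : Bset n) :
    keyF n k l f (negPerm n t) = -keyF n k l f t := by
  rw [keyF, keyF, negPerm_apply, hpart_neg hk hodd]
  ring

lemma sigF_signed (hk : 0 < k) (hodd : OddF n (2*k*l + k) f) : IsSigned n (sigF n k l f) := by
  have hspec := sigF_spec (n := n) (k := k) (l := l) (f := f)
  set σ' : Equiv.Perm (Bset n) := ((negPerm n).trans (sigF n k l f)).trans (negPerm n) with hσ'
  have hspec' : StrictMono (keyF n k l f ∘ ⇑σ') := by
    intro a b hab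
    have h1 : negPerm n b < negPerm n a := by
      rw [lt_iff_coe_lt, negPerm_apply, negPerm_apply]
      rw [lt_iff_coe_lt] at hab
      omega
    have h2 := hspec h1
    show keyF n k l f (negPerm n (sigF n k l f (negPerm n a)))
      < keyF n k l f (negPerm n (sigF n k l f (negPerm n b)))
    rw [keyF_neg hk hodd, keyF_neg hk hodd]
    simp only [Function.comp] at h2
    omega
  have hequ : σ' = sigF n k l f := sortPerm_unique keyF_inj hspec' hspec
  intro s
  have h1 : σ' s = sigF n k l f s := by rw [hequ]
  show sigF n k l f (negPerm n s) = negPerm n (sigF n k l f s)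
  have h2 : negPerm n (sigF n k l f (negPerm n s)) = sigF n k l f s := h1
  have h3 := congrArg (negPerm n) h2
  rw [← h3]
  apply Subtype.ext
  show ((sigF n k l f (negPerm n s) : Bset n) : ℤ)
    = -(-(sigF n k l f (negPerm n s) : ℤ))
  omega

/-- clamped `h`-component of the backward map -/
noncomputable def hFf (n k l : ℕ) (f : Bset n → Bset (2*k*l + k)) : Bset n → Bset k :=
  fun s => ⟨max (-(k:ℤ)) (min (k:ℤ) (hpart n k l f (s : ℤ))), by rw [mem_Bset]; omega⟩

/-- clamped `g`-component of the backward map -/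
noncomputable def gFf (n k l : ℕ) (f : Bset n → Bset (2*k*l + k)) : Bset n → Bset l :=
  fun s => ⟨max (-(l:ℤ)) (min (l:ℤ) (gpart n k l f (bval n (sigF n k l f) (s : ℤ)))), by
    rw [mem_Bset]; omega⟩

lemma hpart_out (hk : 0 < k) {z : ℤ} (hz : ¬(z ∈ Bset n)) : hpart n k l f z = 0 := by
  have h0 : fvv n (2*k*l + k) f z = 0 := dif_neg hz
  rw [hpart, gpart, h0, gqv]
  have h2k : (0:ℤ) < 2*k := by positivity
  have e1 : ((0:ℤ) + k) / (2*k) = 0 := Int.ediv_eq_zero_of_lt (by omega) (by omega)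
  have e2 : ((0:ℤ) + k - 1) / (2*k) = 0 := Int.ediv_eq_zero_of_lt (by omega) (by omega)
  split
  · rw [e1]; ring
  · split
    · rw [e2]; ring
    · ring

lemma gpart_out (hk : 0 < k) {z : ℤ} (hz : ¬(z ∈ Bset n)) : gpart n k l f z = 0 := by
  have h1 := hpart_out (l := l) (f := f) hk hz
  have h0 : fvv n (2*k*l + k) f z = 0 := dif_neg hz
  rw [hpart, h0] at h1
  have h2k : (0:ℤ) < 2*k := by positivity
  have := h1
  nlinarith [this]

lemma hFf_fvv (hk : 0 < k) (hodd : OddF n (2*k*l + k) f) (z : ℤ) :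
    fvv n k (hFf n k l f) z = hpart n k l f z := by
  by_cases hz : z ∈ Bset n
  · rw [fvv_of_mem _ hz]
    show max (-(k:ℤ)) (min (k:ℤ) (hpart n k l f z)) = hpart n k l f z
    rcases lt_trichotomy z 0 with h | h | h
    · have := hpart_range_neg (l := l) (f := f) hk h
      omega
    · rw [h, hpart_zero' hodd]
      omega
    · have := hpart_range_pos (l := l) (f := f) hk h
      omega
  · rw [fvv, dif_neg hz, hpart_out hk hz]

lemma gpart_pos_nonneg (hk : 0 < k) {z : ℤ} (hx : 0 ≤ fvv n (2*k*l + k) f z) :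
    0 ≤ gpart n k l f z := by
  have h2k : (0:ℤ) < 2*k := by positivity
  rw [gpart, gqv]
  split
  · exact Int.ediv_nonneg (by omega) (by omega)
  · split
    · exact Int.ediv_nonneg (by omega) (by omega)
    · exact le_refl 0

lemma gpart_neg_nonpos (hk : 0 < k) {z : ℤ} (hx : fvv n (2*k*l + k) f z ≤ 0) :
    gpart n k l f z ≤ 0 := by
  have h2k : (0:ℤ) < 2*k := by positivity
  rw [gpart, gqv]
  split
  · calc (fvv n (2*k*l + k) f z + k) / (2*k) ≤ (2*k - 1) / (2*k) :=
        Int.ediv_le_ediv h2k (by omega)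
      _ = 0 := Int.ediv_eq_zero_of_lt (by omega) (by omega)
  · split
    · calc (fvv n (2*k*l + k) f z + k - 1) / (2*k) ≤ (2*k - 1) / (2*k) :=
          Int.ediv_le_ediv h2k (by omega)
        _ = 0 := Int.ediv_eq_zero_of_lt (by omega) (by omega)
    · exact le_refl 0

end Part6a
section Part6b

variable {n k l : ℕ} {π : Equiv.Perm (Bset n)} {f : Bset n → Bset (2*k*l + k)}

lemma gqv_zero (k : ℕ) (x : ℤ) : gqv k x 0 = 0 := by simp [gqv]

lemma fvv_zero_of_odd (hodd : OddF n (2*k*l + k) f) {z : ℤ} (hz : z = 0) :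
    fvv n (2*k*l + k) f z = 0 := by rw [hz]; exact hodd.fvv_zero

lemma gpart_mono (hk : 0 < k) (hπ : IsSigned n π) (hf : f ∈ AFin n (2*k*l + k) π true) :
    ∀ i j : ℤ, -(n:ℤ) ≤ i → i ≤ j → j ≤ n →
      gpart n k l f (bval n π i) ≤ gpart n k l f (bval n π j) := by
  intro i j h0 hij h1
  have hfc := mem_AFin.mp hf
  have h2k : (0:ℤ) < 2*k := by positivity
  have hx : fvv n (2*k*l + k) f (bval n π i) ≤ fvv n (2*k*l + k) f (bval n π j) :=
    hfc.pmono' hπ h0 hij h1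
  rcases lt_trichotomy (bval n π i) 0 with hu | hu | hu
  · rcases lt_trichotomy (bval n π j) 0 with hv | hv | hv
    · rw [gpart, gpart, gqv, gqv, if_neg (by omega), if_pos hu, if_neg (by omega), if_pos hv]
      exact Int.ediv_le_ediv h2k (by omega)
    · have hx0 : fvv n (2*k*l + k) f (bval n π j) = 0 := fvv_zero_of_odd hfc.1 hv
      have h01 : gpart n k l f (bval n π j) = 0 := by rw [gpart, hv, gqv_zero]
      rw [h01]
      exact gpart_neg_nonpos hk (by omega)
    · rw [gpart, gpart, gqv, gqv, if_neg (by omega), if_pos hu, if_pos hv]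
      exact Int.ediv_le_ediv h2k (by omega)
  · have hx0 : fvv n (2*k*l + k) f (bval n π i) = 0 := fvv_zero_of_odd hfc.1 hu
    have h01 : gpart n k l f (bval n π i) = 0 := by rw [gpart, hu, gqv_zero]
    rw [h01]
    exact gpart_pos_nonneg hk (by omega)
  · rcases lt_trichotomy (bval n π j) 0 with hv | hv | hv
    · have hxlt : fvv n (2*k*l + k) f (bval n π i) < fvv n (2*k*l + k) f (bval n π j) := by
        rcases eq_or_lt_of_le hx with he | hlt
        · exfalso
          have hne : i ≠ j := by
            intro hcon
            rw [hcon] at hu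
            omega
          have := hfc.pcross hπ i j h0 (by omega) h1 he
          omega
        · exact hlt
      rw [gpart, gpart, gqv, gqv, if_pos hu, if_neg (by omega), if_pos hv]
      exact Int.ediv_le_ediv h2k (by omega)
    · have hx0 : fvv n (2*k*l + k) f (bval n π j) = 0 := fvv_zero_of_odd hfc.1 hv
      have h01 : gpart n k l f (bval n π j) = 0 := by rw [gpart, hv, gqv_zero]
      rw [h01]
      exact gpart_neg_nonpos hk (by omega)
    · rw [gpart, gpart, gqv, gqv, if_pos hu, if_pos hv]
      exact Int.ediv_le_ediv h2k (by omega)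

lemma gpart_bounds (hk : 0 < k) (hl : 0 < l) (hπ : IsSigned n π)
    (hf : f ∈ AFin n (2*k*l + k) π true) :
    ∀ z, z ∈ Bset n → -(l:ℤ) ≤ gpart n k l f z ∧ gpart n k l f z ≤ l := by
  have hfc := mem_AFin.mp hf
  have h2k : (0:ℤ) < 2*k := by positivity
  have hM : 0 < 2*k*l + k := by positivity
  have key : ∀ z, z ∈ Bset n → 0 < z →
      -(l:ℤ) ≤ gpart n k l f z ∧ gpart n k l f z ≤ l := by
    intro z hz hzpos
    have hb := fvv_bounds f z
    have hne : fvv n (2*k*l + k) f z ≠ ((2*k*l + k : ℕ) : ℤ) := by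
      intro hcon
      have := hfc.top_neg hπ hM hz hcon
      omega
    have hxle : fvv n (2*k*l + k) f z ≤ 2*(k:ℤ)*l + k - 1 := by
      have := hb.2
      push_cast at this hne
      omega
    have hxge : -(2*(k:ℤ)*l + k) ≤ fvv n (2*k*l + k) f z := by
      have := hb.1
      push_cast at this
      omega
    have hgp : gpart n k l f z = (fvv n (2*k*l + k) f z + k) / (2*k) := by
      rw [gpart, gqv, if_pos hzpos]
    have hdp := div_pair_pos (k := k) hk (fvv n (2*k*l + k) f z)
    rw [← hgp] at hdp
    constructor
    · by_contra hcon
      push_neg at hcon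
      have h1 : gpart n k l f z ≤ -(l:ℤ) - 1 := by omega
      have := mul_le_mul_of_nonneg_left h1 (le_of_lt h2k)
      nlinarith [hdp.1, hdp.2]
    · by_contra hcon
      push_neg at hcon
      have h1 : (l:ℤ) + 1 ≤ gpart n k l f z := by omega
      have := mul_le_mul_of_nonneg_left h1 (le_of_lt h2k)
      nlinarith [hdp.1, hdp.2]
  intro z hz
  rcases lt_trichotomy z 0 with h | h | h
  · have hneg : gpart n k l f (-z) = -gpart n k l f z := gpart_neg hk hfc.1 z
    have := key (-z) (neg_mem_Bset hz) (by omega)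
    omega
  · rw [h, gpart, gqv_zero]
    omega
  · exact key z hz h

lemma gFf_fvv (hk : 0 < k) (hl : 0 < l) (hπ : IsSigned n π)
    (hf : f ∈ AFin n (2*k*l + k) π true) {z : ℤ} (hz : z ∈ Bset n) :
    fvv n l (gFf n k l f) z = gpart n k l f (bval n (sigF n k l f) z) := by
  rw [fvv_of_mem _ hz]
  show max (-(l:ℤ)) (min (l:ℤ) (gpart n k l f (bval n (sigF n k l f) z))) = _
  have := gpart_bounds hk hl hπ hf (bval n (sigF n k l f) z) (bval_mem _ hz)
  omega

lemma hFf_mem (hk : 0 < k) (hπ : IsSigned n π) (hf : f ∈ AFin n (2*k*l + k) π true) :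
    hFf n k l f ∈ AFin n k (sigF n k l f) true := by
  have hfc := mem_AFin.mp hf
  have hodd := hfc.1
  have hspec := sigF_spec (n := n) (k := k) (l := l) (f := f)
  rw [mem_AFin]
  refine ⟨?_, ?_, ?_, ?_⟩
  · intro z
    rw [hFf_fvv hk hodd, hFf_fvv hk hodd, hpart_neg hk hodd]
  · intro i hi
    have hm1 : ((i:ℤ)) ∈ Bset n := pos_mem_Bset (by omega)
    have hm2 : ((i:ℤ)) + 1 ∈ Bset n := mem_Bset.mpr ⟨by omega, by omega⟩
    rw [hFf_fvv hk hodd, hFf_fvv hk hodd]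
    have hab : (⟨(i:ℤ), hm1⟩ : Bset n) < ⟨(i:ℤ) + 1, hm2⟩ := Subtype.mk_lt_mk.mpr (by omega)
    have h2 := hspec hab
    simp only [Function.comp] at h2
    have hca : bval n (sigF n k l f) (i:ℤ)
        = ((sigF n k l f ⟨(i:ℤ), hm1⟩ : Bset n) : ℤ) := bval_of_mem _ hm1
    have hcb : bval n (sigF n k l f) ((i:ℤ) + 1)
        = ((sigF n k l f ⟨(i:ℤ) + 1, hm2⟩ : Bset n) : ℤ) := bval_of_mem _ hm2
    rw [hca, hcb]
    rcases keyF_lt_iff.mp h2 with h | h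
    · exact le_of_lt h
    · exact le_of_eq h.1
  · intro i hi hd
    have hm1 : ((i:ℤ)) ∈ Bset n := pos_mem_Bset (by omega)
    have hm2 : ((i:ℤ)) + 1 ∈ Bset n := mem_Bset.mpr ⟨by omega, by omega⟩
    rw [hFf_fvv hk hodd, hFf_fvv hk hodd]
    have hab : (⟨(i:ℤ), hm1⟩ : Bset n) < ⟨(i:ℤ) + 1, hm2⟩ := Subtype.mk_lt_mk.mpr (by omega)
    have h2 := hspec hab
    simp only [Function.comp] at h2
    have hca : bval n (sigF n k l f) (i:ℤ)
        = ((sigF n k l f ⟨(i:ℤ), hm1⟩ : Bset n) : ℤ) := bval_of_mem _ hm1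
    have hcb : bval n (sigF n k l f) ((i:ℤ) + 1)
        = ((sigF n k l f ⟨(i:ℤ) + 1, hm2⟩ : Bset n) : ℤ) := bval_of_mem _ hm2
    rw [hca, hcb]
    rw [hca, hcb] at hd
    rcases keyF_lt_iff.mp h2 with h | h
    · exact h
    · exfalso
      have := h.2
      omega
  · intro _ hpos
    have hm1 : ((n:ℤ)) ∈ Bset n := pos_mem_Bset (le_refl n)
    rw [hFf_fvv hk hodd]
    exact (hpart_range_pos hk hpos).2

lemma gFf_mem (hk : 0 < k) (hl : 0 < l) (hπ : IsSigned n π)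
    (hf : f ∈ AFin n (2*k*l + k) π true) :
    gFf n k l f ∈ AFin n l ((sigF n k l f)⁻¹ * π) false := by
  have hfc := mem_AFin.mp hf
  have hodd := hfc.1
  have hσs : IsSigned n (sigF n k l f) := sigF_signed hk hodd
  have hspec := sigF_spec (n := n) (k := k) (l := l) (f := f)
  have h2k : (0:ℤ) < 2*k := by positivity
  have hcomp : ∀ z : ℤ, z ∈ Bset n →
      bval n (sigF n k l f) (bval n ((sigF n k l f)⁻¹ * π) z) = bval n π z := by
    intro z hz
    have h1 : (sigF n k l f) * ((sigF n k l f)⁻¹ * π) = π := mul_inv_cancel_left _ _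
    rw [← bval_mul (sigF n k l f) ((sigF n k l f)⁻¹ * π) hz, h1]
  rw [mem_AFin]
  refine ⟨?_, ?_, ?_, ?_⟩
  · intro z
    by_cases hz : z ∈ Bset n
    · have hnz : -z ∈ Bset n := neg_mem_Bset hz
      rw [gFf_fvv hk hl hπ hf hnz, gFf_fvv hk hl hπ hf hz, hσs.bval_neg,
        gpart_neg hk hodd]
    · have hnz : ¬(-z ∈ Bset n) := fun hcon => hz (by have := neg_mem_Bset hcon; simpa using this)
      rw [fvv, dif_neg hnz, fvv, dif_neg hz]
      ring
  · intro i hi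
    have hm1 : ((i:ℤ)) ∈ Bset n := pos_mem_Bset (by omega)
    have hm2 : ((i:ℤ)) + 1 ∈ Bset n := mem_Bset.mpr ⟨by omega, by omega⟩
    rw [gFf_fvv hk hl hπ hf (bval_mem _ hm1), gFf_fvv hk hl hπ hf (bval_mem _ hm2),
      hcomp _ hm1, hcomp _ hm2]
    exact gpart_mono hk hπ hf (i:ℤ) ((i:ℤ)+1) (by omega) (by omega) (by omega)
  · intro i hi hd
    have hm1 : ((i:ℤ)) ∈ Bset n := pos_mem_Bset (by omega)
    have hm2 : ((i:ℤ)) + 1 ∈ Bset n := mem_Bset.mpr ⟨by omega, by omega⟩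
    rw [gFf_fvv hk hl hπ hf (bval_mem _ hm1), gFf_fvv hk hl hπ hf (bval_mem _ hm2),
      hcomp _ hm1, hcomp _ hm2]
    set τ := (sigF n k l f)⁻¹ * π with hτdef
    have hma : bval n τ ((i:ℤ)+1) ∈ Bset n := bval_mem _ hm2
    have hmb : bval n τ (i:ℤ) ∈ Bset n := bval_mem _ hm1
    have hab : (⟨bval n τ ((i:ℤ)+1), hma⟩ : Bset n) < ⟨bval n τ (i:ℤ), hmb⟩ := by
      rw [lt_iff_coe_lt]
      exact hd
    have h2 := hspec hab
    simp only [Function.comp] at h2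
    have hca : ((sigF n k l f ⟨bval n τ ((i:ℤ)+1), hma⟩ : Bset n) : ℤ)
        = bval n π ((i:ℤ)+1) := by
      rw [← bval_of_mem (sigF n k l f) hma, hcomp _ hm2]
    have hcb : ((sigF n k l f ⟨bval n τ (i:ℤ), hmb⟩ : Bset n) : ℤ)
        = bval n π (i:ℤ) := by
      rw [← bval_of_mem (sigF n k l f) hmb, hcomp _ hm1]
    have hxmono : fvv n (2*k*l + k) f (bval n π (i:ℤ))
        ≤ fvv n (2*k*l + k) f (bval n π ((i:ℤ)+1)) :=
      hfc.pmono' hπ (by omega) (by omega) (by omega)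
    have hdec1 := gpart_decomp (n := n) (k := k) (l := l) f (bval n π (i:ℤ))
    have hdec2 := gpart_decomp (n := n) (k := k) (l := l) f (bval n π ((i:ℤ)+1))
    have hmul : 2*(k:ℤ) * gpart n k l f (bval n π (i:ℤ))
        < 2*k * gpart n k l f (bval n π ((i:ℤ)+1)) → gpart n k l f (bval n π (i:ℤ))
        < gpart n k l f (bval n π ((i:ℤ)+1)) := by
      intro hcon
      have h3 : (2*(k:ℤ)) * gpart n k l f (bval n π (i:ℤ))
          < (2*(k:ℤ)) * gpart n k l f (bval n π ((i:ℤ)+1)) := by linarith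
      exact lt_of_mul_lt_mul_left h3 (by positivity)
    rcases keyF_lt_iff.mp h2 with h | h
    · rw [hca, hcb] at h
      exact hmul (by linarith)
    · obtain ⟨he, hlt⟩ := h
      rw [hca, hcb] at he hlt
      have hdesc : fvv n (2*k*l + k) f (bval n π (i:ℤ))
          < fvv n (2*k*l + k) f (bval n π ((i:ℤ)+1)) :=
        hfc.2.2.1 i hi hlt
      exact hmul (by linarith)
  · intro hcon _
    exact absurd hcon (by simp)

end Part6b
section Part6c

variable {n k l : ℕ} {π : Equiv.Perm (Bset n)} {f : Bset n → Bset (2*k*l + k)}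

lemma bval_out {z : ℤ} (π : Equiv.Perm (Bset n)) (hz : ¬(z ∈ Bset n)) : bval n π z = z :=
  dif_neg hz

lemma fwd_back (hk : 0 < k) (hl : 0 < l) (hπ : IsSigned n π)
    (hf : f ∈ AFin n (2*k*l + k) π true) :
    fwdF n k l (sigF n k l f) (hFf n k l f) (gFf n k l f) = f := by
  have hfc := mem_AFin.mp hf
  have hodd := hfc.1
  funext s
  apply Subtype.ext
  show 2*k * fvv n l (gFf n k l f) (bval n (sigF n k l f)⁻¹ (s:ℤ))
      + fvv n k (hFf n k l f) (s:ℤ) = ((f s : Bset (2*k*l + k)) : ℤ)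
  have hmem : bval n (sigF n k l f)⁻¹ (s:ℤ) ∈ Bset n := bval_mem _ s.2
  rw [gFf_fvv hk hl hπ hf hmem, bval_bval_inv (sigF n k l f) s.2, hFf_fvv hk hodd]
  have hdec := gpart_decomp (n := n) (k := k) (l := l) f (s:ℤ)
  have hs' : (⟨(s : ℤ), s.2⟩ : Bset n) = s := Subtype.ext rfl
  rw [fvv_of_mem f s.2, hs'] at hdec
  linarith

variable {σ τ : Equiv.Perm (Bset n)} {h : Bset n → Bset k} {g : Bset n → Bset l}

lemma hpart_fwd (hk : 0 < k) (hσ : IsSigned n σ) (hτ : IsSigned n τ)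
    (hh : h ∈ AFin n k σ true) (hg : g ∈ AFin n l τ false) :
    ∀ z : ℤ, hpart n k l (fwdF n k l σ h g) z = fvv n k h z := by
  intro z
  have hhc := mem_AFin.mp hh
  have hgc := mem_AFin.mp hg
  by_cases hz : z ∈ Bset n
  · have hfv := fwd_fvv σ h g hz
    have hHb := fvv_bounds h z
    rcases lt_trichotomy z 0 with hzs | hzs | hzs
    · have hne : fvv n k h z ≠ -(k:ℤ) := by
        intro hcon
        have := hhc.bot_pos hσ hk hz hcon
        omega
      have hgq : gpart n k l (fwdF n k l σ h g) z = fvv n l g (bval n σ⁻¹ z) := by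
        rw [gpart, gqv, if_neg (by omega), if_pos hzs, hfv]
        exact div_eq_neg hk rfl (by omega) (by omega)
      rw [hpart, hgq, hfv]
      ring
    · rw [hzs]
      have h0 : fvv n (2*k*l + k) (fwdF n k l σ h g) 0 = 0 := by
        have hfm := fwd_mem hk hσ hτ hh hg
        exact (mem_AFin.mp hfm).1.fvv_zero
      rw [hpart, gpart, gqv_zero, hhc.1.fvv_zero, h0]
      ring
    · have hne : fvv n k h z ≠ (k:ℤ) := by
        intro hcon
        have := hhc.top_neg hσ hk hz hcon
        omega
      have hgq : gpart n k l (fwdF n k l σ h g) z = fvv n l g (bval n σ⁻¹ z) := by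
        rw [gpart, gqv, if_pos hzs, hfv]
        exact div_eq_pos hk rfl (by omega) (by omega)
      rw [hpart, hgq, hfv]
      ring
  · rw [hpart_out hk hz, fvv, dif_neg hz]

lemma gpart_fwd (hk : 0 < k) (hσ : IsSigned n σ) (hτ : IsSigned n τ)
    (hh : h ∈ AFin n k σ true) (hg : g ∈ AFin n l τ false) :
    ∀ z : ℤ, gpart n k l (fwdF n k l σ h g) z = fvv n l g (bval n σ⁻¹ z) := by
  intro z
  have h2k : (0:ℤ) < 2*k := by positivity
  by_cases hz : z ∈ Bset n
  · have hfv := fwd_fvv σ h g hz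
    have hdec := gpart_decomp (n := n) (k := k) (l := l) (fwdF n k l σ h g) z
    have hhp := hpart_fwd hk hσ hτ hh hg z
    rw [hhp, hfv] at hdec
    have : 2*(k:ℤ) * gpart n k l (fwdF n k l σ h g) z
        = 2*(k:ℤ) * fvv n l g (bval n σ⁻¹ z) := by linarith
    exact mul_left_cancel₀ (by positivity : (2*(k:ℤ)) ≠ 0) this
  · rw [gpart_out hk hz, bval_out σ⁻¹ hz, fvv, dif_neg hz]

lemma sigF_fwd (hk : 0 < k) (hσ : IsSigned n σ) (hτ : IsSigned n τ)
    (hh : h ∈ AFin n k σ true) (hg : g ∈ AFin n l τ false) :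
    sigF n k l (fwdF n k l σ h g) = σ := by
  have hhc := mem_AFin.mp hh
  refine sortPerm_unique keyF_inj sigF_spec ?_
  intro a b hab
  have ha := coe_mem_Bset a
  have hb := coe_mem_Bset b
  show keyF n k l (fwdF n k l σ h g) (σ a) < keyF n k l (fwdF n k l σ h g) (σ b)
  rw [keyF_lt_iff]
  rw [hpart_fwd hk hσ hτ hh hg, hpart_fwd hk hσ hτ hh hg]
  have hca : ((σ a : Bset n) : ℤ) = bval n σ (a : ℤ) := (bval_coe σ a).symm
  have hcb : ((σ b : Bset n) : ℤ) = bval n σ (b : ℤ) := (bval_coe σ b).symm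
  rw [hca, hcb]
  have habc : (a : ℤ) < (b : ℤ) := hab
  have hmono := hhc.pmono' hσ (i := (a:ℤ)) (j := (b:ℤ)) (by omega) (by omega) (by omega)
  rcases eq_or_lt_of_le hmono with he | hlt
  · right
    exact ⟨he, hhc.pcross hσ (a:ℤ) (b:ℤ) (by omega) habc (by omega) he⟩
  · left
    exact hlt

lemma hFf_fwd (hk : 0 < k) (hl : 0 < l) (hσ : IsSigned n σ) (hτ : IsSigned n τ)
    (hh : h ∈ AFin n k σ true) (hg : g ∈ AFin n l τ false) :
    hFf n k l (fwdF n k l σ h g) = h := by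
  have hfm := fwd_mem hk hσ hτ hh hg
  have hodd' := (mem_AFin.mp hfm).1
  funext s
  apply Subtype.ext
  have hs' : (⟨(s : ℤ), s.2⟩ : Bset n) = s := Subtype.ext rfl
  have h1 : ((hFf n k l (fwdF n k l σ h g) s : Bset k) : ℤ)
      = fvv n k (hFf n k l (fwdF n k l σ h g)) (s : ℤ) := by
    rw [fvv_of_mem _ s.2, hs']
  rw [h1, hFf_fvv hk hodd', hpart_fwd hk hσ hτ hh hg, fvv_of_mem h s.2, hs']

lemma gFf_fwd (hk : 0 < k) (hl : 0 < l) (hσ : IsSigned n σ) (hτ : IsSigned n τ)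
    (hh : h ∈ AFin n k σ true) (hg : g ∈ AFin n l τ false) :
    gFf n k l (fwdF n k l σ h g) = g := by
  have hfm := fwd_mem hk hσ hτ hh hg
  have hπ' : IsSigned n (σ * τ) := hσ.mul hτ
  funext s
  apply Subtype.ext
  have hs' : (⟨(s : ℤ), s.2⟩ : Bset n) = s := Subtype.ext rfl
  have h1 : ((gFf n k l (fwdF n k l σ h g) s : Bset l) : ℤ)
      = fvv n l (gFf n k l (fwdF n k l σ h g)) (s : ℤ) := by
    rw [fvv_of_mem _ s.2, hs']
  rw [h1, gFf_fvv hk hl hπ' hfm s.2, sigF_fwd hk hσ hτ hh hg,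
    gpart_fwd hk hσ hτ hh hg, bval_inv_bval σ s.2, fvv_of_mem g s.2, hs']

end Part6c

/-- For positive integers `k, l` and a signed permutation `π ∈ B_n`:
`C(2kl+k+n-ades(π), n) = Σ_{στ=π} C(k+n-ades(σ), n) · C(l+n-des(τ), n)`. -/
theorem structure_mult_aug_ord (n k l : ℕ) (hk : 0 < k) (hl : 0 < l)
    (π : Equiv.Perm (Bset n)) (hπ : IsSigned n π) :
    Nat.choose (2 * k * l + k + n - adesB n π) n
      = ∑ p ∈ Finset.univ.filter
          (fun p : Equiv.Perm (Bset n) × Equiv.Perm (Bset n) =>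
            IsSigned n p.1 ∧ IsSigned n p.2 ∧ p.1 * p.2 = π),
          Nat.choose (k + n - adesB n p.1) n *
            Nat.choose (l + n - desB n p.2) n := by
  classical
  have hM : 1 ≤ 2*k*l + k := by
    have := Nat.le_add_left k (2*k*l)
    omega
  have hL : Nat.choose (2*k*l + k + n - adesB n π) n = (AFin n (2*k*l + k) π true).card := by
    rw [AFin_card hπ hM]
    simp
  set D := Finset.univ.filter
      (fun p : Equiv.Perm (Bset n) × Equiv.Perm (Bset n) =>
        IsSigned n p.1 ∧ IsSigned n p.2 ∧ p.1 * p.2 = π) with hD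
  have hR : ∀ p ∈ D, Nat.choose (k + n - adesB n p.1) n * Nat.choose (l + n - desB n p.2) n
      = ((AFin n k p.1 true) ×ˢ (AFin n l p.2 false)).card := by
    intro p hp
    rw [hD, Finset.mem_filter] at hp
    rw [Finset.card_product, AFin_card hp.2.1 (by omega : 1 ≤ k),
      AFin_card hp.2.2.1 (by omega : 1 ≤ l)]
    simp
  have hRS : (∑ p ∈ D, Nat.choose (k + n - adesB n p.1) n * Nat.choose (l + n - desB n p.2) n)
      = (D.sigma (fun p => (AFin n k p.1 true) ×ˢ (AFin n l p.2 false))).card := by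
    rw [Finset.card_sigma]
    exact Finset.sum_congr rfl hR
  rw [hL, hRS]
  apply Finset.card_bij'
    (i := fun f _ => (⟨(sigF n k l f, (sigF n k l f)⁻¹ * π), (hFf n k l f, gFf n k l f)⟩ :
      Σ _p : Equiv.Perm (Bset n) × Equiv.Perm (Bset n),
        (Bset n → Bset k) × (Bset n → Bset l)))
    (j := fun t _ => fwdF n k l t.1.1 t.2.1 t.2.2)
  · intro f hf
    have hfc := mem_AFin.mp hf
    have hσs : IsSigned n (sigF n k l f) := sigF_signed hk hfc.1
    rw [Finset.mem_sigma]
    constructor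
    · rw [hD, Finset.mem_filter]
      exact ⟨Finset.mem_univ _, hσs, hσs.inv.mul hπ, mul_inv_cancel_left _ _⟩
    · rw [Finset.mem_product]
      exact ⟨hFf_mem hk hπ hf, gFf_mem hk hl hπ hf⟩
  · intro t ht
    rw [Finset.mem_sigma] at ht
    obtain ⟨hpD, hprod⟩ := ht
    rw [hD, Finset.mem_filter] at hpD
    obtain ⟨-, hσ, hτ, hστ⟩ := hpD
    rw [Finset.mem_product] at hprod
    have := fwd_mem hk hσ hτ hprod.1 hprod.2
    rwa [hστ] at this
  · intro f hf
    exact fwd_back hk hl hπ hf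
  · rintro ⟨⟨σ, τ⟩, hgp⟩ ht
    obtain ⟨h, g⟩ := hgp
    rw [Finset.mem_sigma] at ht
    obtain ⟨hpD, hprod⟩ := ht
    rw [hD, Finset.mem_filter] at hpD
    obtain ⟨-, hσ, hτ, hστ⟩ := hpD
    rw [Finset.mem_product] at hprod
    have hh := hprod.1
    have hg := hprod.2
    have e1 : sigF n k l (fwdF n k l σ h g) = σ := sigF_fwd hk hσ hτ hh hg
    have e2 : hFf n k l (fwdF n k l σ h g) = h := hFf_fwd hk hl hσ hτ hh hg
    have e3 : gFf n k l (fwdF n k l σ h g) = g := gFf_fwd hk hl hσ hτ hh hg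
    show (⟨(sigF n k l (fwdF n k l σ h g), (sigF n k l (fwdF n k l σ h g))⁻¹ * π),
      (hFf n k l (fwdF n k l σ h g), gFf n k l (fwdF n k l σ h g))⟩ :
        Σ _p : Equiv.Perm (Bset n) × Equiv.Perm (Bset n),
          (Bset n → Bset k) × (Bset n → Bset l)) = ⟨(σ, τ), (h, g)⟩
    rw [e1, e2, e3, ← hστ, inv_mul_cancel_left]
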